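/- arXiv:2209.11387 — 7 statements merged into one kernel-verified Lean document; each statement's English description precedes it below -/
import Mathlib

section
/- For all real c > 0, R ≥ 0, and positive integer K, the three quantities d_I = K·max(0, 1 - ⌊(2^R - 1)/c⌋), d_CC = max(0, K - ⌊(2^R - 1)/c⌋), and d_IR = max(0, K - ⌊R/log₂(1+c)⌋) satisfy d_I ≤ d_CC ≤ d_IR. -/
theorem stmt_1 (c R : ℝ) (K : ℕ) (hc : 0 < c) (hR : 0 ≤ R) (hK : 0 < K) :
    (K : ℤ) * max 0 (1 - ⌊((2:ℝ) ^ R - 1) / c⌋) ≤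
      max 0 ((K : ℤ) - ⌊((2:ℝ) ^ R - 1) / c⌋) ∧
    max 0 ((K : ℤ) - ⌊((2:ℝ) ^ R - 1) / c⌋) ≤
      max 0 ((K : ℤ) - ⌊R / Real.logb 2 (1 + c)⌋) := by
  have h2R : (1:ℝ) ≤ (2:ℝ) ^ R := by
    have := Real.rpow_le_rpow_of_exponent_le (by norm_num : (1:ℝ) ≤ 2) hR
    simpa using this
  have hx : (0:ℝ) ≤ ((2:ℝ) ^ R - 1) / c := div_nonneg (by linarith) hc.le
  have hm1 : 0 ≤ ⌊((2:ℝ) ^ R - 1) / c⌋ := Int.floor_nonneg.mpr hx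
  set m1 := ⌊((2:ℝ) ^ R - 1) / c⌋ with hm1def
  have hb : 0 < Real.logb 2 (1 + c) := Real.logb_pos (by norm_num) (by linarith)
  set t := R / Real.logb 2 (1 + c) with htdef
  have ht0 : 0 ≤ t := div_nonneg hR hb.le
  constructor
  · rcases le_or_gt 1 m1 with h | h
    · rw [max_eq_left (by omega)]
      simpa using le_max_left (0:ℤ) ((K:ℤ) - m1)
    · have hm0 : m1 = 0 := by omega
      rw [hm0]
      simp
  · have hkey : ⌊t⌋ ≤ m1 := by
      rcases lt_or_ge t 1 with h | h
      · have : ⌊t⌋ < 1 := by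
          exact_mod_cast Int.floor_lt.mpr (by exact_mod_cast h)
        omega
      · apply Int.floor_le_floor
        have hlog : Real.log (1 + c) ≠ 0 := by
          have := Real.log_pos (by linarith : (1:ℝ) < 1 + c)
          linarith
        have hrpow : (1 + c) ^ t = (2:ℝ) ^ R := by
          rw [Real.rpow_def_of_pos (by linarith), Real.rpow_def_of_pos (by norm_num)]
          congr 1
          rw [htdef, Real.logb]
          field_simp
        have hber : 1 + t * c ≤ (1 + c) ^ t :=
          one_add_mul_self_le_rpow_one_add (by linarith) h
        rw [hrpow] at hber
        rw [le_div_iff₀ hc]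
        linarith
    exact max_le_max le_rfl (by omega)
end

section
/- Let α be an exponential random variable with mean ᾱ > 0, and let P₁ > 0, P₂ = c·P₁ with c > 0, and R > 0. Then Pr{log₂(1 + α·P₂/(α·P₁ + 1)) < R} equals 1 - exp(-(2^R - 1)/(ᾱ(P₂ - (2^R - 1)P₁))) if 2^R - 1 < c, and equals 1 if 2^R - 1 ≥ c. -/
open MeasureTheory ProbabilityTheory
open scoped ENNReal

theorem stmt_4 (abar P₁ c R : ℝ) (habar : 0 < abar) (hP₁ : 0 < P₁) (hc : 0 < c) (hR : 0 < R)
    (P₂ : ℝ) (hP₂ : P₂ = c * P₁) :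
    ((expMeasure (1 / abar)) {x : ℝ | Real.logb 2 (1 + x * P₂ / (x * P₁ + 1)) < R}).toReal =
      if (2:ℝ) ^ R - 1 < c then
        1 - Real.exp (-(((2:ℝ) ^ R - 1) / (abar * (P₂ - ((2:ℝ) ^ R - 1) * P₁))))
      else 1 := by
  have hP₂pos : 0 < P₂ := by rw [hP₂]; positivity
  set t : ℝ := (2:ℝ) ^ R - 1 with ht
  have ht0 : 0 < t := by
    have h1 : (1:ℝ) < (2:ℝ) ^ R :=
      Real.one_lt_rpow_iff_of_pos (by norm_num) |>.mpr (Or.inl ⟨by norm_num, hR⟩)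
    simp only [ht]; linarith
  have hrpos : (0:ℝ) < 1 / abar := by positivity
  have hprob : IsProbabilityMeasure (expMeasure (1 / abar)) :=
    isProbabilityMeasure_expMeasure hrpos
  set μ := expMeasure (1 / abar) with hμ
  set S := {x : ℝ | Real.logb 2 (1 + x * P₂ / (x * P₁ + 1)) < R} with hS
  have hnull : μ (Set.Iio 0) = 0 := by
    rw [hμ, expMeasure, gammaMeasure, withDensity_apply _ measurableSet_Iio]
    exact lintegral_gammaPDF_of_nonpos le_rfl
  have key : ∀ x : ℝ, 0 ≤ x → (x ∈ S ↔ x * (P₂ - t * P₁) < t) := by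
    intro x hx
    have hd : (0:ℝ) < x * P₁ + 1 := by positivity
    have hg : 0 ≤ x * P₂ / (x * P₁ + 1) := by positivity
    rw [hS, Set.mem_setOf_eq,
      Real.logb_lt_iff_lt_rpow (by norm_num) (by linarith)]
    have h2 : (1 + x * P₂ / (x * P₁ + 1) < (2:ℝ) ^ R) ↔ x * P₂ / (x * P₁ + 1) < t := by
      simp only [ht]; constructor <;> intro <;> linarith
    rw [h2, div_lt_iff₀ hd]
    constructor <;> intro h <;> nlinarith
  by_cases hcase : t < c
  · have hden : 0 < P₂ - t * P₁ := by rw [hP₂]; nlinarith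
    set x₀ : ℝ := t / (P₂ - t * P₁) with hx₀def
    have hx₀ : 0 < x₀ := div_pos ht0 hden
    have hsing : μ {x₀} = 0 := by
      rw [hμ, expMeasure, gammaMeasure]
      exact (withDensity_absolutelyContinuous _ _) (measure_singleton _)
    have hiff : ∀ x : ℝ, 0 ≤ x → (x ∈ S ↔ x < x₀) := by
      intro x hx
      rw [key x hx, hx₀def, lt_div_iff₀ hden]
    have h1 : μ S = μ (Set.Iic x₀) := by
      apply le_antisymm
      · calc μ S ≤ μ (Set.Iic x₀ ∪ Set.Iio 0) := by
              apply measure_mono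
              intro x hx
              by_cases h0 : 0 ≤ x
              · exact Or.inl (((hiff x h0).mp hx).le)
              · exact Or.inr (lt_of_not_ge h0)
          _ ≤ μ (Set.Iic x₀) + μ (Set.Iio 0) := measure_union_le _ _
          _ = μ (Set.Iic x₀) := by rw [hnull, add_zero]
      · calc μ (Set.Iic x₀) ≤ μ (S ∪ (Set.Iio 0 ∪ {x₀})) := by
              apply measure_mono
              intro x hx
              by_cases h0 : 0 ≤ x
              · rcases lt_or_eq_of_le (Set.mem_Iic.mp hx) with h | h
                · exact Or.inl ((hiff x h0).mpr h)
                · exact Or.inr (Or.inr h)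
              · exact Or.inr (Or.inl (lt_of_not_ge h0))
          _ ≤ μ S + μ (Set.Iio 0 ∪ {x₀}) := measure_union_le _ _
          _ ≤ μ S + (μ (Set.Iio 0) + μ {x₀}) := by
              gcongr; exact measure_union_le _ _
          _ = μ S := by rw [hnull, hsing, add_zero, add_zero]
    rw [if_pos hcase, h1]
    have h2 : (μ (Set.Iic x₀)).toReal = cdf (expMeasure (1 / abar)) x₀ := by
      rw [cdf_eq_real]; rfl
    rw [h2, cdf_expMeasure_eq hrpos, if_pos hx₀.le]
    congr 1
    congr 1
    rw [hx₀def]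
    field_simp
  · rw [if_neg hcase]
    push_neg at hcase
    have hden : P₂ - t * P₁ ≤ 0 := by rw [hP₂]; nlinarith
    have h1 : μ S = 1 := by
      apply le_antisymm (prob_le_one)
      calc (1:ℝ≥0∞) = μ Set.univ := (measure_univ).symm
        _ ≤ μ (S ∪ Set.Iio 0) := by
            apply measure_mono
            intro x _
            by_cases h0 : 0 ≤ x
            · exact Or.inl ((key x h0).mpr (by nlinarith))
            · exact Or.inr (lt_of_not_ge h0)
        _ ≤ μ S + μ (Set.Iio 0) := measure_union_le _ _
        _ = μ S := by rw [hnull, add_zero]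
    rw [h1, ENNReal.toReal_one]
end

section
/- Fix c > 0, ᾱ > 0, P₁ > 0, K ≥ 1, and define φ_K(γ) = ∫₀^c ⋯ ∫₀^c exp(-(c/(ᾱP₁)) Σ_{k=1}^K 1/z_k) · u(γ + Σ_{k=1}^K z_k - Kc) · Π_{k=1}^K z_k^{-2} dz₁⋯dz_K, where u is the unit step function. If 0 < γ < c, then e^{-Kc/(ᾱP₁(c - γ/K))}·(1/(c - γ/K) - 1/c)^K ≤ φ_K(γ) ≤ e^{-K/(ᾱP₁)}·(1/(c - γ) - 1/c)^K. -/
open MeasureTheory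

noncomputable def phi (c abar P₁ : ℝ) (K : ℕ) (γ : ℝ) : ℝ :=
  ∫ z in Set.univ.pi (fun _ : Fin K => Set.Icc (0:ℝ) c),
    (if (K : ℝ) * c - γ ≤ ∑ k, z k then (1:ℝ) else 0) *
      Real.exp (-(c / (abar * P₁)) * ∑ k, (z k)⁻¹) * (∏ k, (z k) ^ 2)⁻¹

lemma indicator_pi_prod (b c : ℝ) (K : ℕ) (h : ℝ → ℝ) :
    (Set.univ.pi (fun _ : Fin K => Set.Icc b c)).indicator (fun z => ∏ k, h (z k))
      = fun z => ∏ k, (Set.Icc b c).indicator h (z k) := by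
  funext z
  by_cases hz : z ∈ Set.univ.pi (fun _ : Fin K => Set.Icc b c)
  · rw [Set.indicator_of_mem hz]
    exact Finset.prod_congr rfl fun k _ =>
      (Set.indicator_of_mem (Set.mem_univ_pi.mp hz k) h).symm
  · rw [Set.indicator_of_notMem hz]
    rw [Set.mem_univ_pi] at hz
    push_neg at hz
    obtain ⟨k, hk⟩ := hz
    exact (Finset.prod_eq_zero (Finset.mem_univ k) (Set.indicator_of_notMem hk h)).symm

lemma integrable_prod_ind (b c : ℝ) (hb : 0 < b) (K : ℕ) :
    Integrable (fun z : Fin K → ℝ =>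
      ∏ k, (Set.Icc b c).indicator (fun x => (x ^ 2)⁻¹) (z k)) := by
  apply Integrable.fintype_prod (f := fun _ : Fin K => (Set.Icc b c).indicator fun x => (x ^ 2)⁻¹)
  intro i
  rw [integrable_indicator_iff measurableSet_Icc]
  exact ContinuousOn.integrableOn_Icc <| ((continuous_pow 2).continuousOn.inv₀
    fun x hx => pow_ne_zero 2 (lt_of_lt_of_le hb hx.1).ne')

lemma prod_setIntegral (b c : ℝ) (K : ℕ) :
    ∫ z in Set.univ.pi (fun _ : Fin K => Set.Icc b c), ∏ k, ((z k) ^ 2)⁻¹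
      = (∫ x in Set.Icc b c, (x ^ 2)⁻¹) ^ K := by
  rw [← integral_indicator (MeasurableSet.univ_pi fun _ => measurableSet_Icc)]
  rw [show (Set.univ.pi (fun _ : Fin K => Set.Icc b c)).indicator
      (fun z => ∏ k, ((z k) ^ 2)⁻¹)
      = fun z => ∏ k, (Set.Icc b c).indicator (fun x => (x ^ 2)⁻¹) (z k) from
    indicator_pi_prod b c K (fun x => (x ^ 2)⁻¹)]
  rw [integral_fintype_prod_volume_eq_pow (ι := Fin K) ((Set.Icc b c).indicator fun x => (x ^ 2)⁻¹)]
  rw [integral_indicator measurableSet_Icc, Fintype.card_fin]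

lemma int_inv_sq (b c : ℝ) (hb : 0 < b) (hbc : b ≤ c) :
    ∫ x in Set.Icc b c, (x ^ 2)⁻¹ = 1 / b - 1 / c := by
  have h0 : (0:ℝ) ∉ Set.uIcc b c :=
    Set.notMem_uIcc_of_lt hb (hb.trans_le hbc)
  have hz : ∀ x : ℝ, (x ^ 2)⁻¹ = x ^ (-2 : ℤ) := by
    intro x
    rw [zpow_neg, zpow_two, pow_two]
  rw [MeasureTheory.integral_Icc_eq_integral_Ioc, ← intervalIntegral.integral_of_le hbc]
  simp_rw [hz]
  rw [integral_zpow (Or.inr ⟨by norm_num, h0⟩)]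
  norm_num
  ring

theorem stmt_7 (c abar P₁ γ : ℝ) (K : ℕ) (hc : 0 < c) (habar : 0 < abar) (hP₁ : 0 < P₁)
    (hK : 1 ≤ K) (hγ0 : 0 < γ) (hγc : γ < c) :
    Real.exp (-(K : ℝ) * c / (abar * P₁ * (c - γ / K))) *
        (1 / (c - γ / K) - 1 / c) ^ K ≤ phi c abar P₁ K γ ∧
    phi c abar P₁ K γ ≤ Real.exp (-(K : ℝ) / (abar * P₁)) * (1 / (c - γ) - 1 / c) ^ K := by
  have hKpos : (0:ℝ) < (K:ℝ) := by exact_mod_cast hK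
  have hK1 : (1:ℝ) ≤ (K:ℝ) := by exact_mod_cast hK
  have hab : 0 < abar * P₁ := mul_pos habar hP₁
  set b₁ : ℝ := c - γ / K with hb₁def
  set b₂ : ℝ := c - γ with hb₂def
  have hb₂ : 0 < b₂ := by simp [hb₂def]; linarith
  have hγK : γ / K ≤ γ := div_le_self hγ0.le hK1
  have hb₁ : 0 < b₁ := by
    have : γ / K < c := lt_of_le_of_lt hγK hγc
    simp [hb₁def]; linarith
  have hb₁c : b₁ ≤ c := by
    have : 0 ≤ γ / K := div_nonneg hγ0.le hKpos.le
    simp [hb₁def]; linarith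
  have hb₂c : b₂ ≤ c := by simp [hb₂def]; linarith
  set S := Set.univ.pi (fun _ : Fin K => Set.Icc (0:ℝ) c) with hSdef
  set T := Set.univ.pi (fun _ : Fin K => Set.Icc b₁ c) with hTdef
  have hSmeas : MeasurableSet S := MeasurableSet.univ_pi fun _ => measurableSet_Icc
  have hTmeas : MeasurableSet T := MeasurableSet.univ_pi fun _ => measurableSet_Icc
  have hTS : T ⊆ S := by
    intro z hz k _
    have := Set.mem_univ_pi.mp hz k
    exact ⟨le_trans hb₁.le this.1, this.2⟩
  set f : (Fin K → ℝ) → ℝ := fun z =>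
    (if (K : ℝ) * c - γ ≤ ∑ k, z k then (1:ℝ) else 0) *
      Real.exp (-(c / (abar * P₁)) * ∑ k, (z k)⁻¹) * (∏ k, (z k) ^ 2)⁻¹ with hfdef
  have hphi : phi c abar P₁ K γ = ∫ z in S, f z := rfl
  have hf_nonneg : ∀ z, 0 ≤ f z := by
    intro z
    rw [hfdef]
    dsimp only
    apply mul_nonneg (mul_nonneg ?_ (Real.exp_pos _).le) ?_
    · split_ifs <;> norm_num
    · positivity
  have hf_meas : Measurable f := by
    apply Measurable.mul
    apply Measurable.mul
    · exact Measurable.ite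
        (measurableSet_le measurable_const
          (Finset.measurable_sum _ fun k _ => measurable_pi_apply k))
        measurable_const measurable_const
    · exact ((Finset.measurable_sum _ fun k _ =>
        (measurable_pi_apply k).inv).const_mul _).exp
    · exact (Finset.measurable_prod _ fun k _ =>
        (measurable_pi_apply k).pow_const 2).inv
  set E₂ : ℝ := Real.exp (-(K : ℝ) / (abar * P₁)) with hE₂def
  set g' : (Fin K → ℝ) → ℝ := fun z =>
    E₂ * ∏ k, (Set.Icc b₂ c).indicator (fun x => (x ^ 2)⁻¹) (z k) with hg'def
  have hg'_nonneg : ∀ z, 0 ≤ g' z := by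
    intro z
    exact mul_nonneg (Real.exp_pos _).le (Finset.prod_nonneg fun k _ =>
      Set.indicator_nonneg (fun x _ => inv_nonneg.mpr (sq_nonneg x)) _)
  have hfg' : ∀ z ∈ S, f z ≤ g' z := by
    intro z hz
    have hzk : ∀ k, z k ∈ Set.Icc (0:ℝ) c := Set.mem_univ_pi.mp hz
    by_cases hcase : (K : ℝ) * c - γ ≤ ∑ k, z k
    · have hlow : ∀ k, b₂ ≤ z k := by
        intro k
        have hsum : z k + ∑ j ∈ Finset.univ.erase k, z j = ∑ j, z j :=
          Finset.add_sum_erase _ _ (Finset.mem_univ k)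
        have hcard : (Finset.univ.erase k).card = K - 1 := by
          rw [Finset.card_erase_of_mem (Finset.mem_univ k), Finset.card_univ, Fintype.card_fin]
        have hbound : ∑ j ∈ Finset.univ.erase k, z j ≤ ((K:ℝ) - 1) * c := by
          calc ∑ j ∈ Finset.univ.erase k, z j ≤ ∑ _j ∈ Finset.univ.erase k, c :=
              Finset.sum_le_sum fun j _ => (hzk j).2
            _ = ((K - 1 : ℕ) : ℝ) * c := by rw [Finset.sum_const, hcard]; simp
            _ = ((K:ℝ) - 1) * c := by
              congr 1
              push_cast [Nat.cast_sub hK]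
              ring
        have : (K:ℝ) * c - γ - ((K:ℝ) - 1) * c ≤ z k := by linarith
        simp only [hb₂def]; linarith
      have hmem : ∀ k, z k ∈ Set.Icc b₂ c := fun k => ⟨hlow k, (hzk k).2⟩
      have hprod : (∏ k, (z k) ^ 2)⁻¹
          = ∏ k, (Set.Icc b₂ c).indicator (fun x => (x ^ 2)⁻¹) (z k) := by
        rw [← Finset.prod_inv_distrib]
        exact Finset.prod_congr rfl fun k _ => (Set.indicator_of_mem (hmem k) (fun x => (x ^ 2)⁻¹)).symm
      have hexp : Real.exp (-(c / (abar * P₁)) * ∑ k, (z k)⁻¹) ≤ E₂ := by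
        rw [hE₂def, Real.exp_le_exp]
        have hsum : (K:ℝ) * c⁻¹ ≤ ∑ k, (z k)⁻¹ := by
          calc (K:ℝ) * c⁻¹ = ∑ _k : Fin K, c⁻¹ := by
                rw [Finset.sum_const, Finset.card_univ, Fintype.card_fin]; simp [mul_comm]
            _ ≤ ∑ k, (z k)⁻¹ := Finset.sum_le_sum fun k _ =>
                inv_anti₀ (lt_of_lt_of_le hb₂ (hlow k)) (hzk k).2
        have ha : 0 ≤ c / (abar * P₁) := div_nonneg hc.le hab.le
        have : c / (abar * P₁) * ((K:ℝ) * c⁻¹) ≤ c / (abar * P₁) * ∑ k, (z k)⁻¹ :=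
          mul_le_mul_of_nonneg_left hsum ha
        have heq : c / (abar * P₁) * ((K:ℝ) * c⁻¹) = (K:ℝ) / (abar * P₁) := by
          field_simp
        rw [neg_div, neg_mul]
        rw [← heq]
        linarith [this]
      rw [hfdef]
      dsimp only
      rw [if_pos hcase, one_mul]
      rw [hprod, hg'def]
      exact mul_le_mul_of_nonneg_right hexp (Finset.prod_nonneg fun k _ =>
        Set.indicator_nonneg (fun x _ => inv_nonneg.mpr (sq_nonneg x)) _)
    · rw [hfdef]
      dsimp only
      rw [if_neg hcase]
      simp only [zero_mul]
      exact hg'_nonneg z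
  have hg'_int : Integrable g' := (integrable_prod_ind b₂ c hb₂ K).const_mul E₂
  have hf_int_S : IntegrableOn f S := by
    apply Integrable.mono' hg'_int.integrableOn hf_meas.aestronglyMeasurable
    rw [ae_restrict_iff' hSmeas]
    exact Filter.Eventually.of_forall fun z hz => by
      rw [Real.norm_eq_abs, abs_of_nonneg (hf_nonneg z)]; exact hfg' z hz
  constructor
  · -- lower bound
    set E₁ : ℝ := Real.exp (-(K : ℝ) * c / (abar * P₁ * (c - γ / K))) with hE₁def
    set g : (Fin K → ℝ) → ℝ := fun z => E₁ * ∏ k, ((z k) ^ 2)⁻¹ with hgdef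
    have hgf : ∀ z ∈ T, g z ≤ f z := by
      intro z hz
      have hzk : ∀ k, z k ∈ Set.Icc b₁ c := Set.mem_univ_pi.mp hz
      have hzpos : ∀ k, 0 < z k := fun k => lt_of_lt_of_le hb₁ (hzk k).1
      have hcase : (K : ℝ) * c - γ ≤ ∑ k, z k := by
        have : (K:ℝ) * b₁ ≤ ∑ k, z k := by
          calc (K:ℝ) * b₁ = ∑ _k : Fin K, b₁ := by
                rw [Finset.sum_const, Finset.card_univ, Fintype.card_fin]; simp [mul_comm]
            _ ≤ ∑ k, z k := Finset.sum_le_sum fun k _ => (hzk k).1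
        have hKb : (K:ℝ) * b₁ = (K:ℝ) * c - γ := by
          rw [hb₁def]
          field_simp
        linarith
      have hexp : E₁ ≤ Real.exp (-(c / (abar * P₁)) * ∑ k, (z k)⁻¹) := by
        rw [hE₁def, Real.exp_le_exp]
        have hsum : ∑ k, (z k)⁻¹ ≤ (K:ℝ) * b₁⁻¹ := by
          calc ∑ k, (z k)⁻¹ ≤ ∑ _k : Fin K, b₁⁻¹ :=
              Finset.sum_le_sum fun k _ => inv_anti₀ hb₁ (hzk k).1
            _ = (K:ℝ) * b₁⁻¹ := by
              rw [Finset.sum_const, Finset.card_univ, Fintype.card_fin]; simp [mul_comm]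
        have ha : 0 ≤ c / (abar * P₁) := div_nonneg hc.le hab.le
        have h1 : c / (abar * P₁) * ∑ k, (z k)⁻¹ ≤ c / (abar * P₁) * ((K:ℝ) * b₁⁻¹) :=
          mul_le_mul_of_nonneg_left hsum ha
        have heq : c / (abar * P₁) * ((K:ℝ) * b₁⁻¹) = (K:ℝ) * c / (abar * P₁ * b₁) := by
          field_simp
        have : -(K : ℝ) * c / (abar * P₁ * (c - γ / K)) = -((K:ℝ) * c / (abar * P₁ * b₁)) := by
          rw [← hb₁def]; ring
        rw [this]
        linarith
      rw [hfdef]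
      dsimp only
      rw [if_pos hcase, one_mul]
      rw [hgdef, ← Finset.prod_inv_distrib]
      exact mul_le_mul_of_nonneg_right hexp
        (Finset.prod_nonneg fun k _ => inv_nonneg.mpr (sq_nonneg _))
    have hg_int_T : IntegrableOn g T := by
      apply Integrable.const_mul
      apply (integrable_indicator_iff hTmeas).mp
      have h1 : T.indicator (fun z => ∏ k, ((z k) ^ 2)⁻¹)
          = fun z => ∏ k, (Set.Icc b₁ c).indicator (fun x => (x ^ 2)⁻¹) (z k) := by
        rw [hTdef]; exact indicator_pi_prod b₁ c K (fun x => (x ^ 2)⁻¹)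
      rw [h1]
      exact integrable_prod_ind b₁ c hb₁ K
    have hf_int_T : IntegrableOn f T := hf_int_S.mono_set hTS
    have hcalc : ∫ z in T, g z = E₁ * (1 / b₁ - 1 / c) ^ K := by
      rw [hgdef]
      rw [MeasureTheory.integral_const_mul]
      rw [hTdef, prod_setIntegral b₁ c K]
      rw [int_inv_sq b₁ c hb₁ hb₁c]
    calc E₁ * (1 / (c - γ / K) - 1 / c) ^ K = ∫ z in T, g z := by rw [hcalc, hb₁def]
      _ ≤ ∫ z in T, f z := setIntegral_mono_on hg_int_T hf_int_T hTmeas hgf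
      _ ≤ ∫ z in S, f z := by
          apply setIntegral_mono_set hf_int_S
          · exact Filter.Eventually.of_forall fun z => hf_nonneg z
          · exact hTS.eventuallyLE
      _ = phi c abar P₁ K γ := hphi.symm
  · -- upper bound
    have hcalc : ∫ z, g' z = E₂ * (1 / b₂ - 1 / c) ^ K := by
      rw [hg'def]
      rw [MeasureTheory.integral_const_mul]
      rw [integral_fintype_prod_volume_eq_pow (ι := Fin K) ((Set.Icc b₂ c).indicator fun x => (x ^ 2)⁻¹)]
      rw [integral_indicator measurableSet_Icc, Fintype.card_fin, int_inv_sq b₂ c hb₂ hb₂c]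
    calc phi c abar P₁ K γ = ∫ z in S, f z := hphi
      _ ≤ ∫ z in S, g' z := setIntegral_mono_on hf_int_S hg'_int.integrableOn hSmeas hfg'
      _ ≤ ∫ z, g' z := setIntegral_le_integral hg'_int
          (Filter.Eventually.of_forall fun z => hg'_nonneg z)
      _ = E₂ * (1 / (c - γ) - 1 / c) ^ K := by rw [hcalc, hb₂def]
end

section
/- Define φ_K as in the HARQ-CC analysis: φ_K(γ) = ∫_{[0,c]^K} exp(-(c/(ᾱP₁)) Σ_{k=1}^K 1/z_k) · 1{Σ_{k=1}^K z_k ≥ Kc - γ} · Π z_k^{-2} dz. Then for all γ and any Δ with 0 < Δ ≤ c: (ᾱP₁/c)·e^{-1/(ᾱP₁)}·φ_{K-1}(γ - c) ≤ φ_K(γ) ≤ e^{-1/(ᾱP₁)}·( ((c-Δ)/(cΔ))·φ_{K-1}(γ) + (ᾱP₁/c)·φ_{K-1}(γ - c + Δ) ). -/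
open MeasureTheory

noncomputable def ker (c a t : ℝ) : ℝ :=
  if t ∈ Set.Icc (0:ℝ) c then Real.exp (-a * t⁻¹) * (t ^ 2)⁻¹ else 0

/-- pointwise bound on the 1-d kernel -/
lemma ker_le {a : ℝ} (ha : 0 < a) {z : ℝ} (hz : 0 ≤ z) :
    Real.exp (-a * z⁻¹) * (z ^ 2)⁻¹ ≤ 4 / a ^ 2 := by
  rcases eq_or_lt_of_le hz with h | h
  · simp [← h]
    positivity
  · set x := a * z⁻¹ with hx
    have hxpos : 0 < x := by positivity
    have h1 : x ^ 2 / 4 ≤ Real.exp x := by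
      have h2 : x / 2 + 1 ≤ Real.exp (x / 2) := Real.add_one_le_exp _
      have h3 : Real.exp (x / 2) ^ 2 = Real.exp x := by
        rw [sq, ← Real.exp_add]; ring_nf
      nlinarith [Real.exp_pos (x/2), sq_nonneg (x/2)]
    have h2 : Real.exp (-x) ≤ 4 / x ^ 2 := by
      rw [Real.exp_neg, inv_le_comm₀ (Real.exp_pos x) (by positivity), inv_div]
      exact h1
    have h4 : (0:ℝ) ≤ (z ^ 2)⁻¹ := by positivity
    calc Real.exp (-a * z⁻¹) * (z ^ 2)⁻¹ = Real.exp (-x) * (z^2)⁻¹ := by rw [hx]; ring_nf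
      _ ≤ (4 / x ^ 2) * (z^2)⁻¹ := mul_le_mul_of_nonneg_right h2 h4
      _ = 4 / a ^ 2 := by
          rw [hx]
          field_simp

lemma onedim_Ioc {a : ℝ} (ha : 0 < a) {s t : ℝ} (hs : 0 < s) (hst : s ≤ t) :
    ∫ z in Set.Ioc s t, Real.exp (-a * z⁻¹) * (z ^ 2)⁻¹ =
      a⁻¹ * Real.exp (-a * t⁻¹) - a⁻¹ * Real.exp (-a * s⁻¹) := by
  rw [← intervalIntegral.integral_of_le hst]
  have hderiv : ∀ z ∈ Set.uIcc s t,
      HasDerivAt (fun z => a⁻¹ * Real.exp (-a * z⁻¹)) (Real.exp (-a * z⁻¹) * (z ^ 2)⁻¹) z := by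
    intro z hz
    rw [Set.uIcc_of_le hst] at hz
    have hz0 : z ≠ 0 := (lt_of_lt_of_le hs hz.1).ne'
    have h1 : HasDerivAt (fun z : ℝ => z⁻¹) (-(z ^ 2)⁻¹) z := hasDerivAt_inv hz0
    have h2 := (h1.const_mul (-a)).exp.const_mul a⁻¹
    refine h2.congr_deriv ?_
    field_simp
  have hcont : ContinuousOn (fun z => Real.exp (-a * z⁻¹) * (z ^ 2)⁻¹) (Set.uIcc s t) := by
    apply ContinuousOn.mul
    · exact Real.continuous_exp.comp_continuousOn
        ((continuousOn_id.inv₀ (fun z hz => by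
          rw [Set.uIcc_of_le hst] at hz
          exact (lt_of_lt_of_le hs hz.1).ne')).const_smul (-a))
    · apply ContinuousOn.inv₀
      · fun_prop
      · intro z hz
        rw [Set.uIcc_of_le hst] at hz
        have : z ≠ 0 := (lt_of_lt_of_le hs hz.1).ne'
        positivity
  rw [intervalIntegral.integral_eq_sub_of_hasDerivAt hderiv (hcont.intervalIntegrable)]

lemma integrableOn_onedim {a : ℝ} (ha : 0 < a) {s t : ℝ} (hs : 0 ≤ s) :
    IntegrableOn (fun z => Real.exp (-a * z⁻¹) * (z ^ 2)⁻¹) (Set.Ioc s t) := by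
  refine Measure.integrableOn_of_bounded (M := 4 / a ^ 2) measure_Ioc_lt_top.ne ?_ ?_
  · exact (((measurable_inv.const_mul (-a)).exp.mul
      ((measurable_id.pow_const 2).inv))).aestronglyMeasurable
  · filter_upwards [ae_restrict_mem measurableSet_Ioc] with z hz
    rw [Real.norm_of_nonneg (by positivity)]
    exact ker_le ha (le_trans hs hz.1.le)

lemma onedim_Ioc_zero {a : ℝ} (ha : 0 < a) {t : ℝ} (ht : 0 < t) :
    ∫ z in Set.Ioc (0:ℝ) t, Real.exp (-a * z⁻¹) * (z ^ 2)⁻¹ = a⁻¹ * Real.exp (-a * t⁻¹) := by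
  set s : ℕ → Set ℝ := fun k => Set.Ioc (t / (k + 1)) t with hsdef
  have hsm : ∀ k, MeasurableSet (s k) := fun k => measurableSet_Ioc
  have hmono : Monotone s := by
    intro k l hkl
    apply Set.Ioc_subset_Ioc_left
    gcongr
  have hunion : ⋃ k, s k = Set.Ioc (0:ℝ) t := by
    ext z
    simp only [hsdef, Set.mem_iUnion, Set.mem_Ioc]
    constructor
    · rintro ⟨k, h1, h2⟩
      refine ⟨lt_trans (by positivity) h1, h2⟩
    · rintro ⟨h1, h2⟩
      obtain ⟨k, hk⟩ := exists_nat_gt (t / z)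
      refine ⟨k, ?_, h2⟩
      rw [div_lt_iff₀ (by positivity)]
      rw [div_lt_iff₀ h1] at hk
      nlinarith
  have hint : IntegrableOn (fun z => Real.exp (-a * z⁻¹) * (z ^ 2)⁻¹) (⋃ k, s k) := by
    rw [hunion]; exact integrableOn_onedim ha le_rfl
  have htend := tendsto_setIntegral_of_monotone hsm hmono hint
  rw [hunion] at htend
  have heval : ∀ k : ℕ, ∫ z in s k, Real.exp (-a * z⁻¹) * (z ^ 2)⁻¹ =
      a⁻¹ * Real.exp (-a * t⁻¹) - a⁻¹ * Real.exp (-a * (t / (k+1))⁻¹) := by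
    intro k
    exact onedim_Ioc ha (by positivity) (div_le_self ht.le (by exact_mod_cast Nat.succ_le_succ (Nat.zero_le k)))
  have htend2 : Filter.Tendsto (fun k : ℕ => ∫ z in s k, Real.exp (-a * z⁻¹) * (z ^ 2)⁻¹)
      Filter.atTop (nhds (a⁻¹ * Real.exp (-a * t⁻¹))) := by
    simp only [heval]
    have h0 : Filter.Tendsto (fun k : ℕ => Real.exp (-a * (t / (k+1))⁻¹)) Filter.atTop (nhds 0) := by
      apply Real.tendsto_exp_atBot.comp
      simp only [inv_div]
      have h1 : Filter.Tendsto (fun k : ℕ => ((k:ℝ)+1)) Filter.atTop Filter.atTop :=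
        Filter.tendsto_atTop_add_const_right _ 1 tendsto_natCast_atTop_atTop
      exact (h1.atTop_div_const ht).const_mul_atTop_of_neg (neg_neg_iff_pos.mpr ha)
    have := ((tendsto_const_nhds (x := a⁻¹ * Real.exp (-a * t⁻¹)) (f := Filter.atTop (α := ℕ)))).sub
      (h0.const_mul a⁻¹)
    simpa using this
  exact tendsto_nhds_unique htend htend2

lemma ker_nonneg (c a t : ℝ) : 0 ≤ ker c a t := by
  unfold ker; split_ifs <;> positivity

lemma measurable_box_integrand (c a γ : ℝ) (m : ℕ) :
    Measurable (fun z : Fin m → ℝ =>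
      (if (m : ℝ) * c - γ ≤ ∑ k, z k then (1:ℝ) else 0) *
        Real.exp (-a * ∑ k, (z k)⁻¹) * (∏ k, (z k) ^ 2)⁻¹) := by
  apply Measurable.mul
  · apply Measurable.mul
    · exact Measurable.ite
        (measurableSet_le measurable_const (Finset.measurable_sum _ fun k _ => measurable_pi_apply k))
        measurable_const measurable_const
    · exact ((Finset.measurable_sum _ fun k _ => (measurable_pi_apply k).inv).const_mul (-a)).exp
  · exact (Finset.measurable_prod _ fun k _ => (measurable_pi_apply k).pow_const 2).inv

lemma box_integrand_nonneg (c a γ : ℝ) {m : ℕ} (z : Fin m → ℝ) :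
    0 ≤ (if (m : ℝ) * c - γ ≤ ∑ k, z k then (1:ℝ) else 0) *
        Real.exp (-a * ∑ k, (z k)⁻¹) * (∏ k, (z k) ^ 2)⁻¹ := by
  have h1 : (0:ℝ) ≤ (∏ k, (z k) ^ 2)⁻¹ := by positivity
  split_ifs <;> positivity

lemma prod_ker_eq {c a : ℝ} {m : ℕ} {z : Fin m → ℝ}
    (hz : z ∈ Set.univ.pi (fun _ : Fin m => Set.Icc (0:ℝ) c)) :
    ∏ k, ker c a (z k) = Real.exp (-a * ∑ k, (z k)⁻¹) * (∏ k, (z k) ^ 2)⁻¹ := by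
  have h1 : ∀ k, ker c a (z k) = Real.exp (-a * (z k)⁻¹) * ((z k) ^ 2)⁻¹ := fun k =>
    if_pos (hz k (Set.mem_univ k))
  rw [Finset.prod_congr rfl fun k _ => h1 k, Finset.prod_mul_distrib, Finset.prod_inv_distrib,
    Finset.mul_sum, Real.exp_sum]

lemma box_integrand_bound {c a : ℝ} (ha : 0 < a) (γ : ℝ) {m : ℕ} {z : Fin m → ℝ}
    (hz : z ∈ Set.univ.pi (fun _ : Fin m => Set.Icc (0:ℝ) c)) :
    ‖(if (m : ℝ) * c - γ ≤ ∑ k, z k then (1:ℝ) else 0) *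
        Real.exp (-a * ∑ k, (z k)⁻¹) * (∏ k, (z k) ^ 2)⁻¹‖ ≤ (4 / a ^ 2) ^ m := by
  rw [Real.norm_of_nonneg (box_integrand_nonneg c a γ z), mul_assoc, ← prod_ker_eq hz]
  have h2 : (∏ k, ker c a (z k)) ≤ (4 / a ^ 2) ^ m := by
    calc (∏ k, ker c a (z k)) ≤ ∏ _k : Fin m, (4 / a ^ 2) :=
          Finset.prod_le_prod (fun k _ => ker_nonneg c a _)
            (fun k _ => by
              unfold ker
              split_ifs with h
              · exact ker_le ha h.1
              · positivity)
      _ = (4 / a ^ 2) ^ m := by rw [Finset.prod_const, Finset.card_univ, Fintype.card_fin]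
  have h3 : (0:ℝ) ≤ ∏ k, ker c a (z k) := Finset.prod_nonneg fun k _ => ker_nonneg c a _
  calc (if (m : ℝ) * c - γ ≤ ∑ k, z k then (1:ℝ) else 0) * ∏ k, ker c a (z k)
      ≤ 1 * ∏ k, ker c a (z k) := by
        apply mul_le_mul_of_nonneg_right _ h3
        split_ifs <;> norm_num
    _ ≤ (4 / a ^ 2) ^ m := by rw [one_mul]; exact h2

lemma box_measure_lt_top {c : ℝ} (m : ℕ) :
    (volume : Measure (Fin m → ℝ)) (Set.univ.pi fun _ : Fin m => Set.Icc (0:ℝ) c) < ⊤ := by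
  rw [volume_pi_pi]
  simp only [Real.volume_Icc, sub_zero, Finset.prod_const]
  exact ENNReal.pow_lt_top ENNReal.ofReal_lt_top

lemma integrableOn_box_integrand {c a : ℝ} (ha : 0 < a) (γ : ℝ) (m : ℕ) :
    IntegrableOn (fun z : Fin m → ℝ =>
      (if (m : ℝ) * c - γ ≤ ∑ k, z k then (1:ℝ) else 0) *
        Real.exp (-a * ∑ k, (z k)⁻¹) * (∏ k, (z k) ^ 2)⁻¹)
      (Set.univ.pi fun _ : Fin m => Set.Icc (0:ℝ) c) := by
  refine Measure.integrableOn_of_bounded (M := (4 / a ^ 2) ^ m) (box_measure_lt_top m).ne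
    (measurable_box_integrand c a γ m).aestronglyMeasurable ?_
  filter_upwards [ae_restrict_mem (MeasurableSet.univ_pi fun _ => measurableSet_Icc)] with z hz
  exact box_integrand_bound ha γ hz

lemma phi_nonneg {c abar P₁ : ℝ} (m : ℕ) (γ : ℝ) : 0 ≤ phi c abar P₁ m γ := by
  unfold phi
  exact setIntegral_nonneg (MeasurableSet.univ_pi fun _ => measurableSet_Icc)
    (fun z _ => box_integrand_nonneg c _ γ z)

lemma phi_mono {c abar P₁ : ℝ} (hc : 0 < c) (habar : 0 < abar) (hP₁ : 0 < P₁) (m : ℕ)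
    {γ₁ γ₂ : ℝ} (h : γ₁ ≤ γ₂) : phi c abar P₁ m γ₁ ≤ phi c abar P₁ m γ₂ := by
  have ha : 0 < c / (abar * P₁) := by positivity
  unfold phi
  apply setIntegral_mono_on (integrableOn_box_integrand ha γ₁ m)
    (integrableOn_box_integrand ha γ₂ m)
    (MeasurableSet.univ_pi fun _ => measurableSet_Icc)
  intro z _
  have h1 : (0:ℝ) ≤ (∏ k, (z k) ^ 2)⁻¹ := by positivity
  apply mul_le_mul_of_nonneg_right _ h1
  apply mul_le_mul_of_nonneg_right _ (Real.exp_pos _).le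
  split_ifs with h1 h2
  · exact le_rfl
  · exact absurd (by linarith : (m:ℝ) * c - γ₂ ≤ ∑ k, z k) h2
  · norm_num
  · exact le_rfl

lemma phi_abs_le {c abar P₁ : ℝ} (hc : 0 < c) (habar : 0 < abar) (hP₁ : 0 < P₁) (m : ℕ) (γ : ℝ) :
    |phi c abar P₁ m γ| ≤ (4 / (c / (abar * P₁)) ^ 2) ^ m *
      ((volume : Measure (Fin m → ℝ)) (Set.univ.pi fun _ : Fin m => Set.Icc (0:ℝ) c)).toReal := by
  have ha : 0 < c / (abar * P₁) := by positivity
  rw [← Real.norm_eq_abs]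
  exact norm_setIntegral_le_of_norm_le_const (box_measure_lt_top m)
    (fun z hz => box_integrand_bound ha γ hz)

lemma ker_le' {c a : ℝ} (ha : 0 < a) (t : ℝ) : ker c a t ≤ 4 / a ^ 2 := by
  unfold ker
  split_ifs with h
  · exact ker_le ha h.1
  · positivity

lemma measurable_ker (c a : ℝ) : Measurable (ker c a) := by
  unfold ker
  exact Measurable.ite measurableSet_Icc
    (((measurable_inv.const_mul (-a)).exp.mul ((measurable_id.pow_const 2).inv))) measurable_const


lemma prod_ker_eq_zero {c a : ℝ} {m : ℕ} {z : Fin m → ℝ}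
    (hz : z ∉ Set.univ.pi (fun _ : Fin m => Set.Icc (0:ℝ) c)) :
    ∏ k, ker c a (z k) = 0 := by
  simp only [Set.mem_pi, Set.mem_univ, forall_true_left, not_forall] at hz
  obtain ⟨k, hk⟩ := hz
  exact Finset.prod_eq_zero (Finset.mem_univ k) (if_neg hk)

lemma phi_eq_indicator (c abar P₁ : ℝ) (m : ℕ) (γ : ℝ) :
    phi c abar P₁ m γ = ∫ z : Fin m → ℝ,
      (if (m : ℝ) * c - γ ≤ ∑ k, z k then (1:ℝ) else 0) * ∏ k, ker c (c / (abar * P₁)) (z k) := by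
  unfold phi
  rw [← integral_indicator (MeasurableSet.univ_pi fun _ => measurableSet_Icc)]
  congr 1
  funext z
  by_cases hz : z ∈ Set.univ.pi (fun _ : Fin m => Set.Icc (0:ℝ) c)
  · rw [Set.indicator_of_mem hz, prod_ker_eq hz, mul_assoc]
  · rw [Set.indicator_of_notMem hz, prod_ker_eq_zero hz, mul_zero]

lemma integrable_G {c a : ℝ} (hc : 0 < c) (ha : 0 < a) (n : ℕ) (b : ℝ) :
    Integrable (fun p : ℝ × (Fin n → ℝ) =>
        (if b ≤ p.1 + ∑ j, p.2 j then (1:ℝ) else 0) * (ker c a p.1 * ∏ j, ker c a (p.2 j)))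
      ((volume : Measure ℝ).prod (Measure.pi fun _ : Fin n => (volume : Measure ℝ))) := by
  set μ := (volume : Measure ℝ).prod (Measure.pi fun _ : Fin n => (volume : Measure ℝ)) with hμ
  set S := (Set.Icc (0:ℝ) c) ×ˢ (Set.univ.pi fun _ : Fin n => Set.Icc (0:ℝ) c) with hS
  have hSm : MeasurableSet S := measurableSet_Icc.prod (MeasurableSet.univ_pi fun _ => measurableSet_Icc)
  have hSfin : μ S < ⊤ := by
    rw [hμ, hS, Measure.prod_prod, Measure.pi_pi]
    simp only [Real.volume_Icc, sub_zero, Finset.prod_const]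
    exact ENNReal.mul_lt_top (ENNReal.ofReal_lt_top) (ENNReal.pow_lt_top ENNReal.ofReal_lt_top)
  apply Integrable.mono' (g := S.indicator fun _ => (4 / a ^ 2) * (4 / a ^ 2) ^ n)
  · exact (integrable_indicator_iff hSm).2 (integrableOn_const hSfin.ne)
  · apply Measurable.aestronglyMeasurable
    apply Measurable.mul
    · refine Measurable.ite (measurableSet_le measurable_const ?_) measurable_const measurable_const
      exact measurable_fst.add (Finset.measurable_sum _ fun j _ =>
        (measurable_pi_apply j).comp measurable_snd)
    · exact ((measurable_ker c a).comp measurable_fst).mul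
        (Finset.measurable_prod _ fun j _ =>
          (measurable_ker c a).comp ((measurable_pi_apply j).comp measurable_snd))
  · apply Filter.Eventually.of_forall
    intro p
    have h0 : (0:ℝ) ≤ (if b ≤ p.1 + ∑ j, p.2 j then (1:ℝ) else 0) * (ker c a p.1 * ∏ j, ker c a (p.2 j)) := by
      have := ker_nonneg c a p.1
      have h2 : (0:ℝ) ≤ ∏ j, ker c a (p.2 j) := Finset.prod_nonneg fun j _ => ker_nonneg c a _
      split_ifs <;> positivity
    rw [Real.norm_of_nonneg h0]
    by_cases hp : p ∈ S
    · rw [Set.indicator_of_mem hp]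
      have h1 : ker c a p.1 ≤ 4 / a ^ 2 := ker_le' ha _
      have h2 : (∏ j, ker c a (p.2 j)) ≤ (4 / a ^ 2) ^ n := by
        calc (∏ j, ker c a (p.2 j)) ≤ ∏ _j : Fin n, (4 / a ^ 2) :=
              Finset.prod_le_prod (fun j _ => ker_nonneg c a _) (fun j _ => ker_le' ha _)
          _ = (4 / a ^ 2) ^ n := by rw [Finset.prod_const, Finset.card_univ, Fintype.card_fin]
      have h3 : (0:ℝ) ≤ ∏ j, ker c a (p.2 j) := Finset.prod_nonneg fun j _ => ker_nonneg c a _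
      have h4 : (0:ℝ) ≤ 4 / a ^ 2 := by positivity
      calc (if b ≤ p.1 + ∑ j, p.2 j then (1:ℝ) else 0) * (ker c a p.1 * ∏ j, ker c a (p.2 j))
          ≤ 1 * (ker c a p.1 * ∏ j, ker c a (p.2 j)) := by
            apply mul_le_mul_of_nonneg_right _
              (mul_nonneg (ker_nonneg c a _) (Finset.prod_nonneg fun j _ => ker_nonneg c a _))
            split_ifs <;> norm_num
        _ = ker c a p.1 * ∏ j, ker c a (p.2 j) := one_mul _
        _ ≤ (4 / a ^ 2) * (4 / a ^ 2) ^ n := mul_le_mul h1 h2 h3 h4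
    · rw [Set.indicator_of_notMem hp]
      rw [hS, Set.mem_prod, not_and_or] at hp
      rcases hp with hp | hp
      · have : ker c a p.1 = 0 := if_neg hp
        simp [this]
      · simp only [Set.mem_pi, Set.mem_univ, forall_true_left, not_forall] at hp
        obtain ⟨j, hj⟩ := hp
        have : (∏ j, ker c a (p.2 j)) = 0 := Finset.prod_eq_zero (Finset.mem_univ j) (if_neg hj)
        simp [this]

lemma fubini_step {c a : ℝ} (hc : 0 < c) (ha : 0 < a) (n : ℕ) (b : ℝ) :
    (∫ z : Fin (n+1) → ℝ,
        (if b ≤ ∑ k, z k then (1:ℝ) else 0) * ∏ k, ker c a (z k)) =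
      ∫ y : ℝ, ker c a y * ∫ w : Fin n → ℝ,
        (if b - y ≤ ∑ j, w j then (1:ℝ) else 0) * ∏ j, ker c a (w j) := by
  rw [show ((volume : Measure (Fin (n+1) → ℝ))) = Measure.pi fun _ => volume from volume_pi,
    ← ((measurePreserving_piFinSuccAbove (fun _ : Fin (n+1) => (volume : Measure ℝ)) 0).symm).integral_comp']
  have he : ∀ (x : ℝ × (Fin n → ℝ)) (k : Fin (n+1)),
      (MeasurableEquiv.piFinSuccAbove (fun _ : Fin (n+1) => ℝ) 0).symm x k
        = (Fin.cons x.1 x.2 : Fin (n+1) → ℝ) k := by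
    intro x k
    simp [MeasurableEquiv.piFinSuccAbove_symm_apply, Fin.insertNthEquiv, Fin.insertNth_zero]
  simp_rw [he, Fin.sum_univ_succ, Fin.prod_univ_succ, Fin.cons_zero, Fin.cons_succ]
  rw [MeasureTheory.integral_prod _ (integrable_G hc ha n b)]
  rw [show ((volume : Measure (Fin n → ℝ))) = Measure.pi fun _ => volume from volume_pi]
  congr 1
  funext y
  rw [show (fun w : Fin n → ℝ =>
      (if b ≤ y + ∑ j, w j then (1:ℝ) else 0) * (ker c a y * ∏ j, ker c a (w j))) =
    fun w : Fin n → ℝ => ker c a y *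
      ((if b - y ≤ ∑ j, w j then (1:ℝ) else 0) * ∏ j, ker c a (w j)) from
    funext fun w => by
      have : (b ≤ y + ∑ j, w j) ↔ (b - y ≤ ∑ j, w j) := by constructor <;> intro h <;> linarith
      rw [if_congr this rfl rfl]; ring]
  rw [integral_const_mul]


theorem stmt_10 (c abar P₁ γ Δ : ℝ) (K : ℕ) (hc : 0 < c) (habar : 0 < abar) (hP₁ : 0 < P₁)
    (hK : 2 ≤ K) (hΔ0 : 0 < Δ) (hΔc : Δ ≤ c) :
    (abar * P₁ / c) * Real.exp (-1 / (abar * P₁)) * phi c abar P₁ (K - 1) (γ - c) ≤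
        phi c abar P₁ K γ ∧
    phi c abar P₁ K γ ≤ Real.exp (-1 / (abar * P₁)) *
        ((c - Δ) / (c * Δ) * phi c abar P₁ (K - 1) γ +
          (abar * P₁ / c) * phi c abar P₁ (K - 1) (γ - c + Δ)) := by
  obtain ⟨n, rfl⟩ : ∃ n, K = n + 1 := ⟨K - 1, by omega⟩
  have hK1 : n + 1 - 1 = n := rfl
  rw [hK1]
  set a := c / (abar * P₁) with hadef
  have ha : 0 < a := by positivity
  have e1 : a⁻¹ = abar * P₁ / c := by rw [hadef, inv_div]
  have e2 : -a * c⁻¹ = -1 / (abar * P₁) := by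
    rw [hadef]; field_simp
  -- the master identity
  have key : phi c abar P₁ (n+1) γ = ∫ y in Set.Ioc (0:ℝ) c,
      Real.exp (-a * y⁻¹) * (y ^ 2)⁻¹ * phi c abar P₁ n (γ - c + y) := by
    rw [phi_eq_indicator c abar P₁ (n+1) γ, ← hadef,
      fubini_step hc ha n (((n+1 : ℕ) : ℝ) * c - γ)]
    have hinner : ∀ y : ℝ, (∫ w : Fin n → ℝ,
        (if ((n+1 : ℕ) : ℝ) * c - γ - y ≤ ∑ j, w j then (1:ℝ) else 0) * ∏ j, ker c a (w j))
        = phi c abar P₁ n (γ - c + y) := by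
      intro y
      rw [phi_eq_indicator c abar P₁ n (γ - c + y), ← hadef]
      congr 1
      funext w
      have hiff : (((n+1 : ℕ) : ℝ) * c - γ - y ≤ ∑ j, w j) ↔
          ((n : ℝ) * c - (γ - c + y) ≤ ∑ j, w j) := by
        push_cast
        constructor <;> intro h <;> linarith
      rw [if_congr hiff rfl rfl]
    simp_rw [hinner]
    rw [← MeasureTheory.integral_indicator measurableSet_Ioc]
    congr 1
    funext y
    unfold ker
    by_cases hy : y ∈ Set.Ioc (0:ℝ) c
    · rw [Set.indicator_of_mem hy, if_pos (Set.mem_Icc_of_Ioc hy)]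
    · rw [Set.indicator_of_notMem hy]
      by_cases hy2 : y ∈ Set.Icc (0:ℝ) c
      · have hy0 : y = 0 := by
          simp only [Set.mem_Ioc, not_and_or, not_lt, not_le] at hy
          rcases hy with h | h
          · linarith [hy2.1]
          · linarith [hy2.2]
        rw [if_pos hy2, hy0]
        simp
      · rw [if_neg hy2, zero_mul]
  -- uniform bound on phi n
  set M : ℝ := (4 / a ^ 2) ^ n *
    ((volume : Measure (Fin n → ℝ)) (Set.univ.pi fun _ : Fin n => Set.Icc (0:ℝ) c)).toReal
    with hMdef
  have hM : ∀ γ' : ℝ, |phi c abar P₁ n γ'| ≤ M := fun γ' => phi_abs_le hc habar hP₁ n γ'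
  have hphimeas : Measurable (fun y => phi c abar P₁ n (γ - c + y)) := by
    apply Monotone.measurable
    intro y₁ y₂ h
    exact phi_mono hc habar hP₁ n (by linarith)
  -- integrability helper
  have hIntOn : ∀ S : Set ℝ, MeasurableSet S → volume S ≠ ⊤ → S ⊆ Set.Ici (0:ℝ) →
      IntegrableOn (fun y => Real.exp (-a * y⁻¹) * (y ^ 2)⁻¹ * phi c abar P₁ n (γ - c + y)) S := by
    intro S hSm hSf hSsub
    refine Measure.integrableOn_of_bounded (M := 4 / a ^ 2 * M) hSf ?_ ?_
    · exact (((measurable_inv.const_mul (-a)).exp.mul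
        ((measurable_id.pow_const 2).inv)).mul hphimeas).aestronglyMeasurable
    · filter_upwards [ae_restrict_mem hSm] with y hy
      rw [norm_mul]
      have hb1 : ‖Real.exp (-a * y⁻¹) * (y ^ 2)⁻¹‖ ≤ 4 / a ^ 2 := by
        rw [Real.norm_of_nonneg (by positivity)]
        exact ker_le ha (hSsub hy)
      have hb2 : ‖phi c abar P₁ n (γ - c + y)‖ ≤ M := by
        rw [Real.norm_eq_abs]; exact hM _
      exact mul_le_mul hb1 hb2 (norm_nonneg _) (by positivity)
  have hvolIoc : ∀ s t : ℝ, volume (Set.Ioc s t) ≠ ⊤ := fun s t => measure_Ioc_lt_top.ne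
  constructor
  · -- lower bound
    rw [key]
    have step1 : ∫ y in Set.Ioc (0:ℝ) c,
        (Real.exp (-a * y⁻¹) * (y ^ 2)⁻¹) * phi c abar P₁ n (γ - c)
        ≤ ∫ y in Set.Ioc (0:ℝ) c,
          Real.exp (-a * y⁻¹) * (y ^ 2)⁻¹ * phi c abar P₁ n (γ - c + y) := by
      apply setIntegral_mono_on
        ((integrableOn_onedim ha le_rfl).mul_const _)
        (hIntOn _ measurableSet_Ioc (hvolIoc 0 c) (fun y hy => hy.1.le))
        measurableSet_Ioc
      intro y hy
      exact mul_le_mul_of_nonneg_left (phi_mono hc habar hP₁ n (by linarith [hy.1])) (by positivity)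
    calc abar * P₁ / c * Real.exp (-1 / (abar * P₁)) * phi c abar P₁ n (γ - c)
        = (∫ y in Set.Ioc (0:ℝ) c, Real.exp (-a * y⁻¹) * (y ^ 2)⁻¹) * phi c abar P₁ n (γ - c) := by
          rw [onedim_Ioc_zero ha hc, e2, ← e1]
          try ring
      _ = ∫ y in Set.Ioc (0:ℝ) c,
          (Real.exp (-a * y⁻¹) * (y ^ 2)⁻¹) * phi c abar P₁ n (γ - c) := by
          rw [integral_mul_const]
      _ ≤ _ := step1
  · -- upper bound
    rw [key, ← Set.Ioc_union_Ioc_eq_Ioc hΔ0.le hΔc,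
      setIntegral_union (Set.Ioc_disjoint_Ioc_of_le le_rfl) measurableSet_Ioc
        (hIntOn _ measurableSet_Ioc (hvolIoc 0 Δ) (fun y hy => hy.1.le))
        (hIntOn _ measurableSet_Ioc (hvolIoc Δ c) (fun y hy => (lt_of_le_of_lt hΔ0.le hy.1).le))]
    have upper1 : ∫ y in Set.Ioc (0:ℝ) Δ,
        Real.exp (-a * y⁻¹) * (y ^ 2)⁻¹ * phi c abar P₁ n (γ - c + y)
        ≤ a⁻¹ * Real.exp (-a * c⁻¹) * phi c abar P₁ n (γ - c + Δ) := by
      calc ∫ y in Set.Ioc (0:ℝ) Δ,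
            Real.exp (-a * y⁻¹) * (y ^ 2)⁻¹ * phi c abar P₁ n (γ - c + y)
          ≤ ∫ y in Set.Ioc (0:ℝ) Δ,
            (Real.exp (-a * y⁻¹) * (y ^ 2)⁻¹) * phi c abar P₁ n (γ - c + Δ) := by
            apply setIntegral_mono_on
              (hIntOn _ measurableSet_Ioc (hvolIoc 0 Δ) (fun y hy => hy.1.le))
              ((integrableOn_onedim ha le_rfl).mul_const _)
              measurableSet_Ioc
            intro y hy
            exact mul_le_mul_of_nonneg_left (phi_mono hc habar hP₁ n (by linarith [hy.2]))
              (by positivity)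
        _ = (a⁻¹ * Real.exp (-a * Δ⁻¹)) * phi c abar P₁ n (γ - c + Δ) := by
            rw [integral_mul_const, onedim_Ioc_zero ha hΔ0]
        _ ≤ a⁻¹ * Real.exp (-a * c⁻¹) * phi c abar P₁ n (γ - c + Δ) := by
            apply mul_le_mul_of_nonneg_right _ (phi_nonneg n _)
            apply mul_le_mul_of_nonneg_left _ (by positivity)
            apply Real.exp_le_exp.2
            have h1 : c⁻¹ ≤ Δ⁻¹ := by
              apply inv_anti₀ hΔ0 hΔc
            nlinarith
    have hintsq : ∫ y in Set.Ioc Δ c, (y ^ 2)⁻¹ = Δ⁻¹ - c⁻¹ := by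
      rw [← intervalIntegral.integral_of_le hΔc]
      have hderiv : ∀ y ∈ Set.uIcc Δ c, HasDerivAt (fun y : ℝ => -y⁻¹) ((y ^ 2)⁻¹) y := by
        intro y hy
        rw [Set.uIcc_of_le hΔc] at hy
        have hy0 : y ≠ 0 := (lt_of_lt_of_le hΔ0 hy.1).ne'
        have := (hasDerivAt_inv hy0).neg
        rw [neg_neg] at this; exact this
      have hcont : ContinuousOn (fun y : ℝ => (y ^ 2)⁻¹) (Set.uIcc Δ c) := by
        apply ContinuousOn.inv₀ (by fun_prop)
        intro y hy
        rw [Set.uIcc_of_le hΔc] at hy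
        have : y ≠ 0 := (lt_of_lt_of_le hΔ0 hy.1).ne'
        positivity
      rw [intervalIntegral.integral_eq_sub_of_hasDerivAt hderiv hcont.intervalIntegrable]
      ring
    have upper2 : ∫ y in Set.Ioc Δ c,
        Real.exp (-a * y⁻¹) * (y ^ 2)⁻¹ * phi c abar P₁ n (γ - c + y)
        ≤ Real.exp (-a * c⁻¹) * ((c - Δ) / (c * Δ)) * phi c abar P₁ n γ := by
      have hI2' : IntegrableOn
          (fun y : ℝ => Real.exp (-a * c⁻¹) * (y ^ 2)⁻¹ * phi c abar P₁ n γ)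
          (Set.Ioc Δ c) := by
        refine Measure.integrableOn_of_bounded
          (M := Real.exp (-a * c⁻¹) * (Δ ^ 2)⁻¹ * |phi c abar P₁ n γ|) (hvolIoc Δ c) ?_ ?_
        · exact (((measurable_id.pow_const 2).inv.const_mul _).mul_const _).aestronglyMeasurable
        · filter_upwards [ae_restrict_mem measurableSet_Ioc] with y hy
          rw [norm_mul, norm_mul, Real.norm_of_nonneg (Real.exp_pos _).le,
            Real.norm_of_nonneg (by positivity : (0:ℝ) ≤ (y ^ 2)⁻¹), Real.norm_eq_abs]
          have hb : (y ^ 2)⁻¹ ≤ (Δ ^ 2)⁻¹ := by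
            apply inv_anti₀ (by positivity)
            nlinarith [hy.1]
          apply mul_le_mul_of_nonneg_right _ (abs_nonneg _)
          exact mul_le_mul_of_nonneg_left hb (Real.exp_pos _).le
      calc ∫ y in Set.Ioc Δ c,
            Real.exp (-a * y⁻¹) * (y ^ 2)⁻¹ * phi c abar P₁ n (γ - c + y)
          ≤ ∫ y in Set.Ioc Δ c,
            Real.exp (-a * c⁻¹) * (y ^ 2)⁻¹ * phi c abar P₁ n γ := by
            apply setIntegral_mono_on
              (hIntOn _ measurableSet_Ioc (hvolIoc Δ c)
                (fun y hy => (lt_of_le_of_lt hΔ0.le hy.1).le))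
              hI2' measurableSet_Ioc
            intro y hy
            have hy0 : 0 < y := lt_of_le_of_lt hΔ0.le hy.1
            have hexp : Real.exp (-a * y⁻¹) ≤ Real.exp (-a * c⁻¹) := by
              apply Real.exp_le_exp.2
              have h1 : c⁻¹ ≤ y⁻¹ := inv_anti₀ hy0 hy.2
              nlinarith
            have hphile : phi c abar P₁ n (γ - c + y) ≤ phi c abar P₁ n γ :=
              phi_mono hc habar hP₁ n (by linarith [hy.2])
            apply mul_le_mul
            · exact mul_le_mul_of_nonneg_right hexp (by positivity)
            · exact hphile
            · exact phi_nonneg n _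
            · positivity
        _ = Real.exp (-a * c⁻¹) * ((c - Δ) / (c * Δ)) * phi c abar P₁ n γ := by
            rw [show (fun y : ℝ => Real.exp (-a * c⁻¹) * (y ^ 2)⁻¹ * phi c abar P₁ n γ)
              = fun y : ℝ => (Real.exp (-a * c⁻¹) * phi c abar P₁ n γ) * (y ^ 2)⁻¹ from
              funext fun y => by ring, integral_const_mul, hintsq]
            have : Δ⁻¹ - c⁻¹ = (c - Δ) / (c * Δ) := by
              rw [eq_div_iff (by positivity : (c * Δ) ≠ 0)]
              field_simp
            rw [this]; ring
    calc (∫ y in Set.Ioc (0:ℝ) Δ,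
          Real.exp (-a * y⁻¹) * (y ^ 2)⁻¹ * phi c abar P₁ n (γ - c + y)) +
        ∫ y in Set.Ioc Δ c,
          Real.exp (-a * y⁻¹) * (y ^ 2)⁻¹ * phi c abar P₁ n (γ - c + y)
        ≤ a⁻¹ * Real.exp (-a * c⁻¹) * phi c abar P₁ n (γ - c + Δ) +
          Real.exp (-a * c⁻¹) * ((c - Δ) / (c * Δ)) * phi c abar P₁ n γ :=
          add_le_add upper1 upper2
      _ = Real.exp (-1 / (abar * P₁)) *
          ((c - Δ) / (c * Δ) * phi c abar P₁ n γ +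
            abar * P₁ / c * phi c abar P₁ n (γ - c + Δ)) := by
          rw [e2, ← e1]; ring
end

section
/- Fix c > 0, ᾱ > 0, P₁ > 0, K ≥ 1, and define ψ_K(γ) = ∫_{[0,c]^K} 1{Π_{k=1}^K (1 + c - z_k) ≤ γ} · exp(-(c/(ᾱP₁)) Σ_{k=1}^K 1/z_k) · Π_{k=1}^K z_k^{-2} dz. If 1 < γ < 1 + c, then (1/(1+c-γ^{1/K}) - 1/c)^K · e^{-Kc/(ᾱP₁(1+c-γ^{1/K}))} ≤ ψ_K(γ) ≤ e^{-K/(ᾱP₁)}·(1/(1+c-γ) - 1/c)^K. -/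
open MeasureTheory

noncomputable def psi (c abar P₁ : ℝ) (K : ℕ) (γ : ℝ) : ℝ :=
  ∫ z in Set.univ.pi (fun _ : Fin K => Set.Icc (0:ℝ) c),
    (if ∏ k, (1 + c - z k) ≤ γ then (1:ℝ) else 0) *
      Real.exp (-(c / (abar * P₁)) * ∑ k, (z k)⁻¹) * (∏ k, (z k) ^ 2)⁻¹

lemma oneD {b c : ℝ} (hb : 0 < b) (hbc : b ≤ c) :
    ∫ x in Set.Icc b c, ((x:ℝ)^2)⁻¹ = 1/b - 1/c := by
  have h0 : (0:ℝ) ∉ Set.uIcc b c := by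
    rw [Set.uIcc_of_le hbc]
    intro h; exact absurd h.1 (not_le.2 hb)
  rw [MeasureTheory.integral_Icc_eq_integral_Ioc, ← intervalIntegral.integral_of_le hbc]
  have : ∀ x : ℝ, (x^2)⁻¹ = x ^ (-2 : ℤ) := by
    intro x; rw [zpow_neg, ← zpow_natCast x 2]; norm_num
  simp_rw [this]
  rw [integral_zpow (Or.inr ⟨by norm_num, h0⟩)]
  have hb' : b ≠ 0 := ne_of_gt hb
  have hc' : c ≠ 0 := ne_of_gt (lt_of_lt_of_le hb hbc)
  norm_num
  field_simp
  ring

lemma boxInt {b c : ℝ} (hb : 0 < b) (hbc : b ≤ c) (K : ℕ) :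
    ∫ z in Set.univ.pi (fun _ : Fin K => Set.Icc b c), ∏ k, ((z k)^2)⁻¹
      = (1/b - 1/c)^K := by
  rw [← MeasureTheory.integral_indicator (MeasurableSet.univ_pi fun _ => measurableSet_Icc)]
  have key : ∀ z : Fin K → ℝ,
      (Set.univ.pi fun _ : Fin K => Set.Icc b c).indicator
        (fun z => ∏ k, ((z k)^2)⁻¹) z
      = ∏ k, (Set.Icc b c).indicator (fun x => (x^2)⁻¹) (z k) := by
    intro z
    by_cases h : z ∈ Set.univ.pi fun _ : Fin K => Set.Icc b c
    · rw [Set.indicator_of_mem h]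
      exact Finset.prod_congr rfl fun k _ =>
        (Set.indicator_of_mem (h k (Set.mem_univ k)) (fun x => (x^2)⁻¹)).symm
    · rw [Set.indicator_of_notMem h]
      rw [Set.mem_univ_pi] at h
      push_neg at h
      obtain ⟨k, hk⟩ := h
      exact (Finset.prod_eq_zero (Finset.mem_univ k)
        (by rw [Set.indicator_of_notMem hk])).symm
  simp_rw [key]
  rw [MeasureTheory.integral_fintype_prod_volume_eq_pow ((Set.Icc b c).indicator fun x => (x^2)⁻¹)]
  rw [MeasureTheory.integral_indicator measurableSet_Icc, oneD hb hbc]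
  simp

lemma exp_sq_le {t : ℝ} (ht : 0 ≤ t) : Real.exp (-t) * t^2 ≤ 4 := by
  have h1 : t/2 + 1 ≤ Real.exp (t/2) := Real.add_one_le_exp (t/2)
  have h2 : Real.exp (t/2) * Real.exp (t/2) = Real.exp t := by
    rw [← Real.exp_add]; ring_nf
  have h3 : Real.exp (-t) * Real.exp t = 1 := by
    rw [← Real.exp_add]; simp
  nlinarith [Real.exp_pos (-t), Real.exp_pos (t/2), Real.exp_pos t, sq_nonneg (t/2)]

theorem stmt_12 (c abar P₁ γ : ℝ) (K : ℕ) (hc : 0 < c) (habar : 0 < abar) (hP₁ : 0 < P₁)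
    (hK : 1 ≤ K) (hγ1 : 1 < γ) (hγc : γ < 1 + c) :
    (1 / (1 + c - γ ^ ((K : ℝ)⁻¹)) - 1 / c) ^ K *
        Real.exp (-(K : ℝ) * c / (abar * P₁ * (1 + c - γ ^ ((K : ℝ)⁻¹)))) ≤
      psi c abar P₁ K γ ∧
    psi c abar P₁ K γ ≤
      Real.exp (-(K : ℝ) / (abar * P₁)) * (1 / (1 + c - γ) - 1 / c) ^ K := by
  have hK1 : (1:ℝ) ≤ (K:ℝ) := by exact_mod_cast hK
  have hKpos : (0:ℝ) < (K:ℝ) := lt_of_lt_of_le one_pos hK1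
  have haP : 0 < abar * P₁ := mul_pos habar hP₁
  set a := c / (abar * P₁) with ha
  have ha0 : 0 < a := div_pos hc haP
  have hγ0 : (0:ℝ) < γ := lt_trans one_pos hγ1
  set r := γ ^ ((K:ℝ)⁻¹) with hr
  have hr1 : 1 < r := by
    rw [hr, Real.one_lt_rpow_iff_of_pos hγ0]
    exact Or.inl ⟨hγ1, by positivity⟩
  have hrγ : r ≤ γ := by
    calc r ≤ γ ^ (1:ℝ) :=
          Real.rpow_le_rpow_of_exponent_le hγ1.le (by
            rw [inv_le_one_iff₀]; right; exact hK1)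
      _ = γ := Real.rpow_one γ
  set b := 1 + c - γ with hbdef
  set b' := 1 + c - r with hb'def
  have hb0 : 0 < b := by rw [hbdef]; linarith
  have hbc : b < c := by rw [hbdef]; linarith
  have hb'0 : 0 < b' := by rw [hb'def]; linarith [lt_of_le_of_lt hrγ hγc]
  have hb'c : b' < c := by rw [hb'def]; linarith
  have hrK : r ^ K = γ := by
    rw [hr, ← Real.rpow_natCast (γ ^ ((K:ℝ)⁻¹)) K, ← Real.rpow_mul hγ0.le,
      inv_mul_cancel₀ (ne_of_gt hKpos), Real.rpow_one]
  set F : (Fin K → ℝ) → ℝ := fun z =>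
    (if ∏ k, (1 + c - z k) ≤ γ then (1:ℝ) else 0) *
      Real.exp (-a * ∑ k, (z k)⁻¹) * (∏ k, (z k) ^ 2)⁻¹ with hFdef
  set Box : ℝ → Set (Fin K → ℝ) := fun s => Set.univ.pi (fun _ : Fin K => Set.Icc s c)
    with hBoxdef
  have hBoxmeas : ∀ s, MeasurableSet (Box s) :=
    fun s => MeasurableSet.univ_pi fun _ => measurableSet_Icc
  have hBoxsub : ∀ s, 0 ≤ s → Box s ⊆ Box 0 := fun s hs =>
    Set.pi_mono fun i _ => Set.Icc_subset_Icc hs le_rfl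
  have hpsi : psi c abar P₁ K γ = ∫ z in Box 0, F z := rfl
  -- nonnegativity of F
  have hFnn : ∀ z, 0 ≤ F z := by
    intro z
    apply mul_nonneg (mul_nonneg ?_ (Real.exp_pos _).le) (by positivity)
    split <;> norm_num
  -- measurability of F
  have hFmeas : Measurable F := by
    apply Measurable.mul
    · apply Measurable.mul
      · exact Measurable.ite
          (measurableSet_le (by fun_prop) measurable_const)
          measurable_const measurable_const
      · fun_prop
    · fun_prop
  -- splitting lemma
  have hsplit : ∀ z : Fin K → ℝ,
      Real.exp (-a * ∑ k, (z k)⁻¹) * (∏ k, (z k) ^ 2)⁻¹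
        = ∏ k, (Real.exp (-a * (z k)⁻¹) * ((z k)^2)⁻¹) := by
    intro z
    rw [Finset.prod_mul_distrib, ← Real.exp_sum, ← Finset.prod_inv_distrib, ← Finset.mul_sum]
  -- per-coordinate bound
  have hH : ∀ x : ℝ, 0 ≤ x → Real.exp (-a * x⁻¹) * (x^2)⁻¹ ≤ 4/a^2 := by
    intro x hx
    rcases eq_or_lt_of_le hx with h0 | h0
    · rw [← h0]; norm_num; positivity
    · have hx2 : (x ^ 2)⁻¹ = (a * x⁻¹)^2 / a^2 := by
        field_simp
      rw [hx2, neg_mul a x⁻¹]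
      calc Real.exp (-(a * x⁻¹)) * ((a * x⁻¹)^2 / a^2)
          = (Real.exp (-(a * x⁻¹)) * (a * x⁻¹)^2) / a^2 := by ring
        _ ≤ 4 / a^2 := by gcongr; exact exp_sq_le (by positivity)
  -- volume of boxes
  have hvol : ∀ s : ℝ, volume (Box s) < ⊤ := fun s =>
    (isCompact_univ_pi fun _ => isCompact_Icc).measure_lt_top
  -- integrability of F on Box 0
  have hFint : IntegrableOn F (Box 0) := by
    apply Integrable.mono' ((integrableOn_const_iff (C := (4/a^2)^K)).2 (Or.inr (hvol 0)))
      hFmeas.aestronglyMeasurable.restrict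
    refine (ae_restrict_iff' (hBoxmeas 0)).2 (ae_of_all _ fun z hz => ?_)
    rw [Real.norm_eq_abs, abs_of_nonneg (hFnn z)]
    have h1 : F z ≤ ∏ k, (Real.exp (-a * (z k)⁻¹) * ((z k)^2)⁻¹) := by
      rw [← hsplit z, hFdef]
      have : (if ∏ k, (1 + c - z k) ≤ γ then (1:ℝ) else 0) ≤ 1 := by split <;> norm_num
      calc (if ∏ k, (1 + c - z k) ≤ γ then (1:ℝ) else 0) *
            Real.exp (-a * ∑ k, (z k)⁻¹) * (∏ k, (z k) ^ 2)⁻¹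
          ≤ 1 * Real.exp (-a * ∑ k, (z k)⁻¹) * (∏ k, (z k) ^ 2)⁻¹ := by
            apply mul_le_mul_of_nonneg_right _ (by positivity)
            exact mul_le_mul_of_nonneg_right this (Real.exp_pos _).le
        _ = Real.exp (-a * ∑ k, (z k)⁻¹) * (∏ k, (z k) ^ 2)⁻¹ := by rw [one_mul]
    refine h1.trans ?_
    calc ∏ k, (Real.exp (-a * (z k)⁻¹) * ((z k)^2)⁻¹)
        ≤ ∏ _k : Fin K, (4/a^2) := by
          apply Finset.prod_le_prod (fun k _ => by positivity)
            (fun k _ => hH (z k) (hz k (Set.mem_univ k)).1)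
      _ = (4/a^2)^K := by rw [Finset.prod_const, Finset.card_univ, Fintype.card_fin]
  -- the comparison integrals
  have hcmp : ∀ s C : ℝ, 0 < s → s ≤ c → 0 ≤ C →
      IntegrableOn (fun z : Fin K → ℝ => C * (∏ k, (z k)^2)⁻¹) (Box s) ∧
      ∫ z in Box 0, (Box s).indicator (fun z => C * (∏ k, (z k)^2)⁻¹) z
        = C * (1/s - 1/c)^K := by
    intro s C hs hsc hC
    have hint : IntegrableOn (fun z : Fin K → ℝ => C * (∏ k, (z k)^2)⁻¹) (Box s) := by
      apply Integrable.mono' ((integrableOn_const_iff (C := C * ((s^2)⁻¹)^K)).2 (Or.inr (hvol s)))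
        (Measurable.aestronglyMeasurable (by fun_prop)).restrict
      refine (ae_restrict_iff' (hBoxmeas s)).2 (ae_of_all _ fun z hz => ?_)
      rw [Real.norm_eq_abs, abs_of_nonneg (by positivity)]
      apply mul_le_mul_of_nonneg_left _ hC
      rw [← Finset.prod_inv_distrib]
      calc ∏ k, ((z k)^2)⁻¹ ≤ ∏ _k : Fin K, (s^2)⁻¹ := by
            apply Finset.prod_le_prod (fun k _ => by positivity)
            intro k _
            have h1 : s ≤ z k := (hz k (Set.mem_univ k)).1
            have : s^2 ≤ (z k)^2 := by nlinarith
            exact inv_anti₀ (by positivity) this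
        _ = ((s^2)⁻¹)^K := by rw [Finset.prod_const, Finset.card_univ, Fintype.card_fin]
    refine ⟨hint, ?_⟩
    rw [MeasureTheory.integral_indicator (hBoxmeas s),
      Measure.restrict_restrict (hBoxmeas s),
      Set.inter_eq_left.2 (hBoxsub s hs.le)]
    rw [MeasureTheory.integral_const_mul]
    congr 1
    simp_rw [← Finset.prod_inv_distrib]
    exact boxInt hs hsc K
  -- Upper bound
  have hub : psi c abar P₁ K γ ≤
      Real.exp (-(K:ℝ) / (abar * P₁)) * (1/b - 1/c)^K := by
    obtain ⟨hint, hval⟩ := hcmp b (Real.exp (-(K:ℝ) / (abar * P₁))) hb0 hbc.le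
      (Real.exp_pos _).le
    rw [hpsi, ← hval]
    apply MeasureTheory.integral_mono_of_nonneg (ae_of_all _ fun z => hFnn z)
      (hint.integrable_indicator (hBoxmeas b)).integrableOn
    refine (ae_restrict_iff' (hBoxmeas 0)).2 (ae_of_all _ fun z hz => ?_)
    by_cases hcond : ∏ k, (1 + c - z k) ≤ γ
    · have hmem : z ∈ Box b := by
        intro k _
        refine ⟨?_, (hz k (Set.mem_univ k)).2⟩
        by_contra hlt
        push_neg at hlt
        have hgt : γ < 1 + c - z k := by rw [hbdef] at hlt; linarith
        have hsingle : 1 + c - z k ≤ ∏ j, (1 + c - z j) := by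
          have := Finset.prod_le_prod (f := fun j => if j = k then 1 + c - z k else 1)
            (g := fun j => 1 + c - z j) (s := Finset.univ)
            (fun j _ => by split <;> [linarith; norm_num])
            (fun j _ => by
              split
              · rename_i h; rw [h]
              · have := (hz j (Set.mem_univ j)).2; linarith)
          rw [Finset.prod_ite_eq' Finset.univ k (fun _ => 1 + c - z k)] at this
          simpa using this
        linarith
      rw [Set.indicator_of_mem hmem]
      have hsum : (K:ℝ) * c⁻¹ ≤ ∑ k, (z k)⁻¹ := by
        calc (K:ℝ) * c⁻¹ = ∑ _k : Fin K, c⁻¹ := by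
              rw [Finset.sum_const, Finset.card_univ, Fintype.card_fin, nsmul_eq_mul]
          _ ≤ ∑ k, (z k)⁻¹ := by
              apply Finset.sum_le_sum
              intro k _
              exact inv_anti₀ (lt_of_lt_of_le hb0 (hmem k (Set.mem_univ k)).1)
                (hmem k (Set.mem_univ k)).2
      have hexp : Real.exp (-a * ∑ k, (z k)⁻¹) ≤ Real.exp (-(K:ℝ) / (abar * P₁)) := by
        apply Real.exp_le_exp.2
        have hkey : a * ((K:ℝ) * c⁻¹) = (K:ℝ) / (abar * P₁) := by
          rw [ha]; field_simp
        rw [neg_mul, neg_div]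
        have := mul_le_mul_of_nonneg_left hsum ha0.le
        linarith
      rw [hFdef]
      simp only [if_pos hcond, one_mul]
      exact mul_le_mul_of_nonneg_right hexp (by positivity)
    · have : F z = 0 := by rw [hFdef]; simp [if_neg hcond]
      rw [this]
      exact Set.indicator_nonneg (fun z _ => by positivity) z
  -- Lower bound
  have hlb : Real.exp (-(K:ℝ) * c / (abar * P₁ * b')) * (1/b' - 1/c)^K ≤
      psi c abar P₁ K γ := by
    obtain ⟨hint, hval⟩ := hcmp b' (Real.exp (-(K:ℝ) * c / (abar * P₁ * b'))) hb'0 hb'c.le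
      (Real.exp_pos _).le
    rw [hpsi, ← hval]
    apply MeasureTheory.integral_mono_of_nonneg
      (ae_of_all _ fun z => Set.indicator_nonneg (fun z _ => by positivity) z) hFint
    refine (ae_restrict_iff' (hBoxmeas 0)).2 (ae_of_all _ fun z hz => ?_)
    dsimp only
    by_cases hmem : z ∈ Box b'
    · rw [Set.indicator_of_mem hmem]
      have hcond : ∏ k, (1 + c - z k) ≤ γ := by
        calc ∏ k, (1 + c - z k) ≤ ∏ _k : Fin K, r := by
              apply Finset.prod_le_prod
              · intro k _
                have := (hz k (Set.mem_univ k)).2; linarith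
              · intro k _
                have := (hmem k (Set.mem_univ k)).1
                rw [hb'def] at this; linarith
          _ = r ^ K := by rw [Finset.prod_const, Finset.card_univ, Fintype.card_fin]
          _ = γ := hrK
      have hsum : ∑ k, (z k)⁻¹ ≤ (K:ℝ) * b'⁻¹ := by
        calc ∑ k, (z k)⁻¹ ≤ ∑ _k : Fin K, b'⁻¹ := by
              apply Finset.sum_le_sum
              intro k _
              exact inv_anti₀ hb'0 (hmem k (Set.mem_univ k)).1
          _ = (K:ℝ) * b'⁻¹ := by
              rw [Finset.sum_const, Finset.card_univ, Fintype.card_fin, nsmul_eq_mul]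
      have hexp : Real.exp (-(K:ℝ) * c / (abar * P₁ * b')) ≤
          Real.exp (-a * ∑ k, (z k)⁻¹) := by
        apply Real.exp_le_exp.2
        have hkey : a * ((K:ℝ) * b'⁻¹) = (K:ℝ) * c / (abar * P₁ * b') := by
          rw [ha]; field_simp
        rw [neg_mul, neg_div, neg_mul]
        have := mul_le_mul_of_nonneg_left hsum ha0.le
        linarith
      rw [hFdef]
      simp only [if_pos hcond, one_mul]
      exact mul_le_mul_of_nonneg_right hexp (by positivity)
    · rw [Set.indicator_of_notMem hmem]
      exact hFnn z
  exact ⟨by rw [mul_comm] at hlb; exact hlb, hub⟩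
end

section
/- For positive integers K, ℓ with 1 ≤ ℓ ≤ K, real c > 0 and R > 0, define d_{1,ℓ-1} = max(0, (ℓ-1) - ⌊(2^R-1)/c⌋), d_{2,ℓ} = max(0, ℓ - ⌊(2^R-1)/c⌋) + K - ℓ, and d₂ = max(0, K - ⌊(2^R-1)/c⌋). Then min{ d_{1,ℓ-1} + d_{2,ℓ} : 1 ≤ ℓ ≤ K } = d₂, where d_{1,K} + d_{2,K} is interpreted as d_{1,K-1} + d₂ at ℓ = K. -/
/-!
With `m = ⌊(2^R - 1)/c⌋ ≥ 0`, the `ℓ`-th exponent `max(0, ℓ-1-m) + max(0, ℓ-m) + K - ℓ` equals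
`K - ℓ` for `ℓ ≤ m` and `K + ℓ - 2m - 1` for `ℓ > m`, so over `1 ≤ ℓ ≤ K` it is minimal at
`ℓ = min (m + 1) K`, where it equals `max(0, K - m)`.
-/

/-- The total diversity exponent `d_{1,ℓ-1} + d_{2,ℓ}` of the `ℓ`-th term, with `m` the threshold
`⌊(2^R - 1)/c⌋`. -/
def harqExponent (K : ℕ) (m : ℤ) (ℓ : ℕ) : ℤ :=
  max 0 (((ℓ - 1 : ℕ) : ℤ) - m) + (max 0 ((ℓ : ℤ) - m) + K - ℓ)

lemma max_zero_sub_le_harqExponent {K ℓ : ℕ} {m : ℤ} (hm : 0 ≤ m) (hℓ : ℓ ≤ K) :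
    max 0 ((K : ℤ) - m) ≤ harqExponent K m ℓ := by
  unfold harqExponent
  omega

lemma harqExponent_min_succ_toNat {K : ℕ} {m : ℤ} (hm : 0 ≤ m) :
    harqExponent K m (min (m.toNat + 1) K) = max 0 ((K : ℤ) - m) := by
  unfold harqExponent
  omega

lemma inf'_harqExponent {K : ℕ} (hK : 1 ≤ K) {m : ℤ} (hm : 0 ≤ m) :
    (Finset.Icc 1 K).inf' (Finset.nonempty_Icc.mpr hK) (harqExponent K m) = max 0 ((K : ℤ) - m) :=
  le_antisymm
    (Finset.inf'_le_of_le _ (b := min (m.toNat + 1) K) (by simp [hK])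
      (harqExponent_min_succ_toNat hm).le)
    (Finset.le_inf' _ _ fun _ hℓ => max_zero_sub_le_harqExponent hm (Finset.mem_Icc.mp hℓ).2)

lemma floor_two_rpow_sub_one_div_nonneg {R c : ℝ} (hR : 0 ≤ R) (hc : 0 ≤ c) :
    0 ≤ ⌊((2 : ℝ) ^ R - 1) / c⌋ :=
  Int.floor_nonneg.mpr <|
    div_nonneg (sub_nonneg.mpr (Real.one_le_rpow (by norm_num) hR)) hc

theorem stmt_18 (K : ℕ) (c R : ℝ) (hK : 1 ≤ K) (hc : 0 < c) (hR : 0 < R)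
    (d1 : ℕ → ℤ) (d2 : ℕ → ℤ) (d₂ : ℤ)
    (hd1 : ∀ ℓ, d1 ℓ = max 0 ((ℓ : ℤ) - ⌊((2:ℝ) ^ R - 1) / c⌋))
    (hd2 : ∀ ℓ, d2 ℓ = max 0 ((ℓ : ℤ) - ⌊((2:ℝ) ^ R - 1) / c⌋) + (K : ℤ) - (ℓ : ℤ))
    (hd₂ : d₂ = max 0 ((K : ℤ) - ⌊((2:ℝ) ^ R - 1) / c⌋)) :
    ((Finset.Icc 1 K).inf' (by simp [hK] : (Finset.Icc 1 K).Nonempty)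
      (fun ℓ => d1 (ℓ - 1) + d2 ℓ)) = d₂ := by
  have hterm : (fun ℓ => d1 (ℓ - 1) + d2 ℓ) = harqExponent K ⌊((2:ℝ) ^ R - 1) / c⌋ := by
    funext ℓ
    rw [hd1, hd2, harqExponent]
  rw [hterm, hd₂]
  exact inf'_harqExponent hK (floor_two_rpow_sub_one_div_nonneg hR.le hc.le)
end

section
/- Let α₁,…,α_K be i.i.d. exponential random variables with mean ᾱ > 0 and fix c > 0, R > 0. If R < log₂(1+c), then the outage probability p(P₁) = Pr{Σ_{k=1}^K log₂(1 + α_k c P₁ /(α_k P₁ + 1)) < R} satisfies lim_{P₁→∞} -log p(P₁)/log P₁ = K. -/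
open MeasureTheory ProbabilityTheory Filter

lemma expMeasure_Iic' {r : ℝ} (hr : 0 < r) {x : ℝ} (hx : 0 ≤ x) :
    expMeasure r (Set.Iic x) = ENNReal.ofReal (1 - Real.exp (-(r * x))) := by
  rw [expMeasure, gammaMeasure, withDensity_apply _ measurableSet_Iic]
  have h : ∀ y, gammaPDF 1 r y = exponentialPDF r y := fun y => rfl
  simp_rw [h]
  rw [lintegral_exponentialPDF_eq_antiDeriv hr x, if_pos hx]

lemma expMeasure_Iio0' {r : ℝ} : expMeasure r (Set.Iio 0) = 0 := by
  rw [expMeasure, gammaMeasure, withDensity_apply _ measurableSet_Iio]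
  exact lintegral_gammaPDF_of_nonpos le_rfl

lemma inner_tendsto (d : ℝ) (hd : 0 < d) :
    Tendsto (fun P : ℝ => -Real.log (1 - Real.exp (-(d / P))) / Real.log P) atTop (nhds 1) := by
  have hlog : Tendsto (fun P : ℝ => (Real.log P)⁻¹) atTop (nhds 0) :=
    Real.tendsto_log_atTop.inv_tendsto_atTop
  have hinv : Tendsto (fun P : ℝ => P⁻¹) atTop (nhds 0) := tendsto_inv_atTop_zero
  have hg1 : Tendsto (fun P : ℝ => 1 - Real.log d * (Real.log P)⁻¹) atTop (nhds 1) := by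
    have h := hlog.const_mul (Real.log d)
    have := tendsto_const_nhds (α := ℝ) (x := (1:ℝ)) (f := atTop).sub h
    simpa using this
  have hg2 : Tendsto (fun P : ℝ => (1 - Real.log d * (Real.log P)⁻¹)
      + d * (P⁻¹ * (Real.log P)⁻¹)) atTop (nhds 1) := by
    have h0 : Tendsto (fun P : ℝ => d * (P⁻¹ * (Real.log P)⁻¹)) atTop (nhds 0) := by
      have := (hinv.mul hlog).const_mul d
      simpa using this
    simpa using hg1.add h0
  apply tendsto_of_tendsto_of_tendsto_of_le_of_le' hg1 hg2
  · filter_upwards [eventually_gt_atTop 1] with P hP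
    have hP0 : (0:ℝ) < P := lt_trans one_pos hP
    have hlogP : 0 < Real.log P := Real.log_pos hP
    have hx : 0 < d / P := div_pos hd hP0
    have hexp : Real.exp (-(d / P)) < 1 := by
      have := Real.exp_lt_exp.mpr (show -(d/P) < 0 by linarith)
      simpa [Real.exp_zero] using this
    have hub : 1 - Real.exp (-(d / P)) ≤ d / P := by
      have := Real.add_one_le_exp (-(d / P))
      linarith
    have hL : Real.log (1 - Real.exp (-(d / P))) ≤ Real.log (d / P) :=
      (Real.log_le_log_iff (by linarith) hx).mpr hub
    have hld : Real.log (d / P) = Real.log d - Real.log P := Real.log_div hd.ne' hP0.ne'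
    have heq : (1 : ℝ) - Real.log d * (Real.log P)⁻¹
        = (Real.log P - Real.log d) / Real.log P := by field_simp
    rw [heq]
    exact (div_le_div_iff_of_pos_right hlogP).mpr (by linarith)
  · filter_upwards [eventually_gt_atTop 1] with P hP
    have hP0 : (0:ℝ) < P := lt_trans one_pos hP
    have hlogP : 0 < Real.log P := Real.log_pos hP
    have hx : 0 < d / P := div_pos hd hP0
    have h1 : d / P + 1 ≤ Real.exp (d / P) := Real.add_one_le_exp _
    have h2 : Real.exp (-(d/P)) * Real.exp (d/P) = 1 := by
      rw [← Real.exp_add]; simp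
    have hlb : d / P * Real.exp (-(d / P)) ≤ 1 - Real.exp (-(d / P)) := by
      nlinarith [Real.exp_pos (-(d/P)), Real.exp_pos (d/P)]
    have hxe : 0 < d / P * Real.exp (-(d / P)) := mul_pos hx (Real.exp_pos _)
    have hL : Real.log (d / P * Real.exp (-(d / P)))
        ≤ Real.log (1 - Real.exp (-(d / P))) :=
      (Real.log_le_log_iff hxe (lt_of_lt_of_le hxe hlb)).mpr hlb
    have hle : Real.log (d / P * Real.exp (-(d / P)))
        = Real.log d - Real.log P - d / P := by
      rw [Real.log_mul hx.ne' (Real.exp_pos _).ne', Real.log_exp,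
        Real.log_div hd.ne' hP0.ne']
      ring
    have heq : (1 : ℝ) - Real.log d * (Real.log P)⁻¹ + d * (P⁻¹ * (Real.log P)⁻¹)
        = (Real.log P - Real.log d + d / P) / Real.log P := by field_simp
    rw [heq]
    exact (div_le_div_iff_of_pos_right hlogP).mpr (by rw [hle] at hL; linarith)

lemma pow_tendsto (d : ℝ) (hd : 0 < d) (K : ℕ) :
    Tendsto (fun P : ℝ => -Real.log ((1 - Real.exp (-(d / P))) ^ K) / Real.log P)
      atTop (nhds (K : ℝ)) := by
  have h := (inner_tendsto d hd).const_mul (K : ℝ)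
  rw [mul_one] at h
  refine h.congr (fun P => ?_)
  rw [Real.log_pow]
  ring

set_option maxHeartbeats 1000000 in
theorem stmt_19 (abar c R : ℝ) (K : ℕ) (habar : 0 < abar) (hc : 0 < c) (hR : 0 < R)
    (hK : 0 < K) (hRc : R < Real.logb 2 (1 + c)) (p : ℝ → ℝ)
    (hp : ∀ P₁ : ℝ, p P₁ = ((Measure.pi fun _ : Fin K => expMeasure (1 / abar))
      {α : Fin K → ℝ |
        ∑ k, Real.logb 2 (1 + α k * (c * P₁) / (α k * P₁ + 1)) < R}).toReal) :
    Tendsto (fun P₁ : ℝ => -Real.log (p P₁) / Real.log P₁) atTop (nhds (K : ℝ)) := by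
  have hr : (0:ℝ) < 1 / abar := by positivity
  set r : ℝ := 1 / abar with hr_def
  haveI : IsProbabilityMeasure (expMeasure r) := isProbabilityMeasure_expMeasure hr
  set μ := Measure.pi fun _ : Fin K => expMeasure r with hμ
  haveI : IsProbabilityMeasure μ := by rw [hμ]; infer_instance
  set u : ℝ := (2:ℝ) ^ R - 1 with hu_def
  set s : ℝ := (2:ℝ) ^ (R / (2 * K)) - 1 with hs_def
  have hK1 : (1:ℝ) ≤ (K:ℝ) := by exact_mod_cast hK
  have hRK : 0 < R / (2 * K) := by positivity
  have hu0 : 0 < u := by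
    have h1 : (1:ℝ) < (2:ℝ) ^ R :=
      (Real.one_lt_rpow_iff_of_pos (by norm_num)).mpr (Or.inl ⟨one_lt_two, hR⟩)
    rw [hu_def]; linarith
  have hs0 : 0 < s := by
    have h1 : (1:ℝ) < (2:ℝ) ^ (R / (2 * K)) :=
      (Real.one_lt_rpow_iff_of_pos (by norm_num)).mpr (Or.inl ⟨one_lt_two, hRK⟩)
    rw [hs_def]; linarith
  have huc : u < c := by
    have h2 : (2:ℝ) ^ R < 1 + c :=
      (Real.lt_logb_iff_rpow_lt one_lt_two (by linarith)).mp hRc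
    rw [hu_def]; linarith
  have hsu : s ≤ u := by
    have h1 : (2:ℝ) ^ (R / (2 * K)) ≤ (2:ℝ) ^ R := by
      apply (Real.rpow_le_rpow_left_iff one_lt_two).mpr
      rw [div_le_iff₀ (by positivity : (0:ℝ) < 2 * K)]
      nlinarith
    rw [hs_def, hu_def]; linarith
  have hsc : s < c := lt_of_le_of_lt hsu huc
  set dL : ℝ := r * s / (c - s) with hdL_def
  set dU : ℝ := r * u / (c - u) with hdU_def
  have hdL : 0 < dL := by
    apply div_pos (mul_pos hr hs0) (by linarith)
  have hdU : 0 < dU := by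
    apply div_pos (mul_pos hr hu0) (by linarith)
  -- measure of Icc equals measure of Iic
  have hIcc : ∀ x : ℝ, 0 ≤ x → expMeasure r (Set.Icc 0 x) = expMeasure r (Set.Iic x) := by
    intro x hx
    apply le_antisymm (measure_mono Set.Icc_subset_Iic_self)
    calc expMeasure r (Set.Iic x) ≤ expMeasure r (Set.Iio 0 ∪ Set.Icc 0 x) := by
          apply measure_mono
          intro y hy
          rcases lt_or_ge y 0 with h | h
          · exact Or.inl h
          · exact Or.inr ⟨h, hy⟩
      _ ≤ expMeasure r (Set.Iio 0) + expMeasure r (Set.Icc 0 x) := measure_union_le _ _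
      _ = expMeasure r (Set.Icc 0 x) := by rw [expMeasure_Iio0', zero_add]
  have hnull : μ (⋃ k : Fin K, {α : Fin K → ℝ | α k < 0}) = 0 := by
    apply measure_iUnion_null
    intro k
    have hset : {α : Fin K → ℝ | α k < 0}
        = Set.pi Set.univ (fun i => if i = k then Set.Iio (0:ℝ) else Set.univ) := by
      ext α
      simp only [Set.mem_setOf_eq, Set.mem_pi, Set.mem_univ, true_implies]
      constructor
      · intro h i
        by_cases hik : i = k
        · subst hik; simpa using h
        · simp [hik]
      · intro h
        have := h k
        simpa using this
    rw [hset, hμ, Measure.pi_pi]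
    refine Finset.prod_eq_zero (Finset.mem_univ k) ?_
    simp [expMeasure_Iio0']
  -- the sandwich
  have key : ∀ P : ℝ, 1 < P →
      (1 - Real.exp (-(dL / P))) ^ K ≤ p P ∧ p P ≤ (1 - Real.exp (-(dU / P))) ^ K := by
    intro P hP
    have hP0 : (0:ℝ) < P := lt_trans one_pos hP
    set a : ℝ := s / ((c - s) * P) with ha_def
    set b : ℝ := u / ((c - u) * P) with hb_def
    have hcs : 0 < (c - s) * P := mul_pos (by linarith) hP0
    have hcu : 0 < (c - u) * P := mul_pos (by linarith) hP0
    have ha0 : 0 ≤ a := le_of_lt (div_pos hs0 hcs)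
    have hb0 : 0 ≤ b := le_of_lt (div_pos hu0 hcu)
    have hra : r * a = dL / P := by
      rw [ha_def, hdL_def]; field_simp
    have hrb : r * b = dU / P := by
      rw [hb_def, hdU_def]; field_simp
    have hva : 0 ≤ 1 - Real.exp (-(r * a)) := by
      have h := Real.exp_le_one_iff.mpr (by nlinarith [mul_nonneg hr.le ha0] : -(r * a) ≤ 0)
      linarith
    have hvb : 0 ≤ 1 - Real.exp (-(r * b)) := by
      have h := Real.exp_le_one_iff.mpr (by nlinarith [mul_nonneg hr.le hb0] : -(r * b) ≤ 0)
      linarith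
    have hboxL : (μ (Set.pi Set.univ fun _ : Fin K => Set.Icc (0:ℝ) a)).toReal
        = (1 - Real.exp (-(r * a))) ^ K := by
      rw [hμ, Measure.pi_pi]
      simp_rw [hIcc a ha0, expMeasure_Iic' hr ha0]
      rw [Finset.prod_const, Finset.card_univ, Fintype.card_fin,
        ENNReal.toReal_pow, ENNReal.toReal_ofReal hva]
    have hboxU : (μ (Set.pi Set.univ fun _ : Fin K => Set.Iic b)).toReal
        = (1 - Real.exp (-(r * b))) ^ K := by
      rw [hμ, Measure.pi_pi]
      simp_rw [expMeasure_Iic' hr hb0]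
      rw [Finset.prod_const, Finset.card_univ, Fintype.card_fin,
        ENNReal.toReal_pow, ENNReal.toReal_ofReal hvb]
    -- lower subset
    have hsubL : (Set.pi Set.univ fun _ : Fin K => Set.Icc (0:ℝ) a)
        ⊆ {α : Fin K → ℝ |
            ∑ k, Real.logb 2 (1 + α k * (c * P) / (α k * P + 1)) < R} := by
      intro α hα
      have hterm : ∀ k : Fin K,
          Real.logb 2 (1 + α k * (c * P) / (α k * P + 1)) ≤ R / (2 * K) := by
        intro k
        obtain ⟨hk0, hka⟩ := hα k (Set.mem_univ k)
        have hden : 0 < α k * P + 1 := by nlinarith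
        have h1 : α k * ((c - s) * P) ≤ s := by
          rw [ha_def, le_div_iff₀ hcs] at hka
          exact hka
        have h2 : α k * (c * P) / (α k * P + 1) ≤ s := by
          rw [div_le_iff₀ hden]; nlinarith
        have hnn : 0 ≤ α k * (c * P) / (α k * P + 1) :=
          div_nonneg (mul_nonneg hk0 (by positivity)) hden.le
        have h3 : 1 + α k * (c * P) / (α k * P + 1) ≤ (2:ℝ) ^ (R / (2 * K)) := by
          have : s = (2:ℝ) ^ (R / (2 * K)) - 1 := hs_def
          linarith
        calc Real.logb 2 (1 + α k * (c * P) / (α k * P + 1))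
            ≤ Real.logb 2 ((2:ℝ) ^ (R / (2 * K))) :=
              Real.logb_le_logb_of_le one_lt_two (by linarith) h3
          _ = R / (2 * K) := Real.logb_rpow (by norm_num) (by norm_num)
      have hsum : ∑ k : Fin K, Real.logb 2 (1 + α k * (c * P) / (α k * P + 1))
          ≤ (K : ℝ) * (R / (2 * K)) := by
        calc ∑ k : Fin K, Real.logb 2 (1 + α k * (c * P) / (α k * P + 1))
            ≤ ∑ _k : Fin K, R / (2 * K) := Finset.sum_le_sum fun k _ => hterm k
          _ = (K : ℝ) * (R / (2 * K)) := by
              rw [Finset.sum_const, Finset.card_univ, Fintype.card_fin, nsmul_eq_mul]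
      have hhalf : (K : ℝ) * (R / (2 * K)) = R / 2 := by
        have hKne : (K : ℝ) ≠ 0 := by positivity
        field_simp
      show ∑ k : Fin K, Real.logb 2 (1 + α k * (c * P) / (α k * P + 1)) < R
      rw [hhalf] at hsum
      linarith
    -- upper subset
    have hsubU : {α : Fin K → ℝ |
          ∑ k, Real.logb 2 (1 + α k * (c * P) / (α k * P + 1)) < R}
        ⊆ (Set.pi Set.univ fun _ : Fin K => Set.Iic b)
          ∪ ⋃ k : Fin K, {α : Fin K → ℝ | α k < 0} := by
      intro α hα
      by_cases hpos : ∀ k, 0 ≤ α k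
      · left
        intro k _
        have hterm_nonneg : ∀ i : Fin K,
            0 ≤ Real.logb 2 (1 + α i * (c * P) / (α i * P + 1)) := by
          intro i
          apply Real.logb_nonneg one_lt_two
          have hden : 0 < α i * P + 1 := by nlinarith [hpos i]
          have : 0 ≤ α i * (c * P) / (α i * P + 1) :=
            div_nonneg (mul_nonneg (hpos i) (by positivity)) hden.le
          linarith
        have hk : Real.logb 2 (1 + α k * (c * P) / (α k * P + 1)) < R :=
          lt_of_le_of_lt
            (Finset.single_le_sum (fun i _ => hterm_nonneg i) (Finset.mem_univ k)) hα
        have hden : 0 < α k * P + 1 := by nlinarith [hpos k]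
        have harg : 0 < 1 + α k * (c * P) / (α k * P + 1) := by
          have : 0 ≤ α k * (c * P) / (α k * P + 1) :=
            div_nonneg (mul_nonneg (hpos k) (by positivity)) hden.le
          linarith
        have h2 : 1 + α k * (c * P) / (α k * P + 1) < (2:ℝ) ^ R :=
          (Real.logb_lt_iff_lt_rpow one_lt_two harg).mp hk
        have h3 : α k * (c * P) / (α k * P + 1) < u := by
          have : u = (2:ℝ) ^ R - 1 := hu_def
          linarith
        have h4 : α k * (c * P) < u * (α k * P + 1) := (div_lt_iff₀ hden).mp h3
        show α k ∈ Set.Iic b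
        rw [Set.mem_Iic, hb_def, le_div_iff₀ hcu]
        nlinarith
      · right
        push_neg at hpos
        obtain ⟨k, hk⟩ := hpos
        exact Set.mem_iUnion.mpr ⟨k, hk⟩
    constructor
    · rw [hp P, ← hra, ← hboxL]
      exact ENNReal.toReal_mono (measure_ne_top _ _) (measure_mono hsubL)
    · rw [hp P, ← hrb, ← hboxU]
      apply ENNReal.toReal_mono (measure_ne_top _ _)
      calc μ {α : Fin K → ℝ |
            ∑ k, Real.logb 2 (1 + α k * (c * P) / (α k * P + 1)) < R}
          ≤ μ ((Set.pi Set.univ fun _ : Fin K => Set.Iic b)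
              ∪ ⋃ k : Fin K, {α : Fin K → ℝ | α k < 0}) := measure_mono hsubU
        _ ≤ μ (Set.pi Set.univ fun _ : Fin K => Set.Iic b)
            + μ (⋃ k : Fin K, {α : Fin K → ℝ | α k < 0}) := measure_union_le _ _
        _ = μ (Set.pi Set.univ fun _ : Fin K => Set.Iic b) := by rw [hnull, add_zero]
  -- squeeze
  apply tendsto_of_tendsto_of_tendsto_of_le_of_le' (pow_tendsto dU hdU K) (pow_tendsto dL hdL K)
  · filter_upwards [eventually_gt_atTop 1] with P hP
    obtain ⟨hL, hU⟩ := key P hP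
    have hP0 : (0:ℝ) < P := lt_trans one_pos hP
    have hlogP : 0 < Real.log P := Real.log_pos hP
    have hLpos : 0 < (1 - Real.exp (-(dL / P))) ^ K := by
      apply pow_pos
      have h := Real.exp_lt_one_iff.mpr (by have := div_pos hdL hP0; linarith : -(dL / P) < 0)
      linarith
    have hppos : 0 < p P := lt_of_lt_of_le hLpos hL
    have hUpos : 0 < (1 - Real.exp (-(dU / P))) ^ K := lt_of_lt_of_le hppos hU
    have : Real.log (p P) ≤ Real.log ((1 - Real.exp (-(dU / P))) ^ K) :=
      (Real.log_le_log_iff hppos hUpos).mpr hU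
    exact (div_le_div_iff_of_pos_right hlogP).mpr (by linarith)
  · filter_upwards [eventually_gt_atTop 1] with P hP
    obtain ⟨hL, hU⟩ := key P hP
    have hP0 : (0:ℝ) < P := lt_trans one_pos hP
    have hlogP : 0 < Real.log P := Real.log_pos hP
    have hLpos : 0 < (1 - Real.exp (-(dL / P))) ^ K := by
      apply pow_pos
      have h := Real.exp_lt_one_iff.mpr (by have := div_pos hdL hP0; linarith : -(dL / P) < 0)
      linarith
    have hppos : 0 < p P := lt_of_lt_of_le hLpos hL
    have : Real.log ((1 - Real.exp (-(dL / P))) ^ K) ≤ Real.log (p P) :=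
      (Real.log_le_log_iff hLpos hppos).mpr hL
    exact (div_le_div_iff_of_pos_right hlogP).mpr (by linarith)
end
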